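/- arXiv:2512.21242 — 5 statements merged into one kernel-verified Lean document; each statement's English description precedes it below -/
import Mathlib

section
/- Let G be a finite group and let H ≤ A ≤ G be subgroups, and let r, s be natural numbers. Then A is an (r,s)-regular set of the pair (G,H) if and only if there exists a subset X ⊆ G such that XH = HX⁻¹, the set XH ∩ A is a union of exactly r distinct left cosets of H none of which equals H (i.e., r left cosets of H contained in G∖H), and for every t ∈ G∖A the set XH ∩ tA is a union of exactly s distinct left cosets of H. -/
open scoped Pointwise

/-- A subset `C` of the vertices of a graph `Γ` is an `(r,s)`-regular set if every vertex
in `C` has exactly `r` neighbours in `C` and every vertex outside `C` has exactly `s`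
neighbours in `C`. -/
def IsRegularVertexSet {V : Type*} (Γ : SimpleGraph V) (C : Set V) (r s : ℕ) : Prop :=
  (∀ v ∈ C, {w | w ∈ C ∧ Γ.Adj v w}.ncard = r) ∧
  ∀ v ∉ C, {w | w ∈ C ∧ Γ.Adj v w}.ncard = s

/-- The coset graph `Cos(G,H,U)` on the left cosets of `H` in `G`:
`g₁H` and `g₂H` are adjacent iff `g₁⁻¹ g₂ ∈ U`. -/
def cosetGraph {G : Type*} [Group G] (H : Subgroup G) (U : Set G) : SimpleGraph (G ⧸ H) :=
  SimpleGraph.fromRel fun C D =>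
    ∃ g₁ g₂ : G, QuotientGroup.mk g₁ = C ∧ QuotientGroup.mk g₂ = D ∧ g₁⁻¹ * g₂ ∈ U

/-- `U` is a valid connection set for a coset graph `Cos(G,H,U)`:
inverse-closed, disjoint from `H`, and a union of double cosets of `H` (`HUH = U`). -/
def IsCosetGraphConnectionSet {G : Type*} [Group G] (H : Subgroup G) (U : Set G) : Prop :=
  U⁻¹ = U ∧ (H : Set G) ∩ U = ∅ ∧ (H : Set G) * U * (H : Set G) = U

/-- `A` is an `(r,s)`-regular set of the pair `(G,H)`: there is a coset graph
`Cos(G,H,U)` in which the set of left cosets of `H` in `A` is an `(r,s)`-regular set. -/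
def IsRegularSetOfPair {G : Type*} [Group G] (H A : Subgroup G) (r s : ℕ) : Prop :=
  ∃ U : Set G, IsCosetGraphConnectionSet H U ∧
    IsRegularVertexSet (cosetGraph H U)
      {C : G ⧸ H | ∃ a ∈ A, QuotientGroup.mk a = C} r s

/-- `A` is a perfect code of the pair `(G,H)` iff it is a `(0,1)`-regular set of `(G,H)`. -/
def IsPerfectCodeOfPair {G : Type*} [Group G] (H A : Subgroup G) : Prop :=
  IsRegularSetOfPair H A 0 1

/-- A subgroup `A` is an `(r,s)`-regular set of `G` iff it is an `(r,s)`-regular set of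
the pair `(G,1)`, i.e. an `(r,s)`-regular set in some Cayley graph of `G`. -/
def IsRegularSetOfGroup {G : Type*} [Group G] (A : Subgroup G) (r s : ℕ) : Prop :=
  IsRegularSetOfPair ⊥ A r s

/-- A subgroup `A` is a perfect code of `G` iff it is a `(0,1)`-regular set of `G`. -/
def IsPerfectCodeOfGroup {G : Type*} [Group G] (A : Subgroup G) : Prop :=
  IsRegularSetOfGroup A 0 1

/-- The conjugate subgroup `K^t = t⁻¹ K t`. -/
def conjSub {G : Type*} [Group G] (K : Subgroup G) (t : G) : Subgroup G :=
  K.map (MulAut.conj t⁻¹).toMonoidHom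

section AuxLemmas

variable {G : Type*} [Group G]

private lemma coe_mul_self' (H : Subgroup G) : (H : Set G) * H = H := by
  apply subset_antisymm
  · rintro x ⟨a, ha, b, hb, rfl⟩
    exact H.mul_mem ha hb
  · intro x hx
    exact ⟨x, hx, 1, H.one_mem, mul_one x⟩

private lemma transfer' (H : Subgroup G) {U : Set G}
    (hmul : (H : Set G) * U * H = U) {g b g' b' : G}
    (hg : (QuotientGroup.mk g' : G ⧸ H) = QuotientGroup.mk g)
    (hb : (QuotientGroup.mk b' : G ⧸ H) = QuotientGroup.mk b)
    (h : g'⁻¹ * b' ∈ U) : g⁻¹ * b ∈ U := by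
  have h1 : g⁻¹ * g' ∈ (H : Set G) := QuotientGroup.eq.mp hg.symm
  have h2 : b'⁻¹ * b ∈ (H : Set G) := QuotientGroup.eq.mp hb
  have hm : (g⁻¹ * g') * (g'⁻¹ * b') * (b'⁻¹ * b) ∈ (H : Set G) * U * H :=
    Set.mul_mem_mul (Set.mul_mem_mul h1 h) h2
  rw [hmul] at hm
  have : (g⁻¹ * g') * (g'⁻¹ * b') * (b'⁻¹ * b) = g⁻¹ * b := by group
  rwa [this] at hm

private lemma adj_iff' (H : Subgroup G) (U : Set G) (hU : IsCosetGraphConnectionSet H U)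
    (g b : G) :
    (cosetGraph H U).Adj (QuotientGroup.mk g) (QuotientGroup.mk b) ↔ g⁻¹ * b ∈ U := by
  obtain ⟨hinv, hdisj, hmul⟩ := hU
  rw [cosetGraph, SimpleGraph.fromRel_adj]
  constructor
  · rintro ⟨hne, ⟨g', b', hg, hb, hmem⟩ | ⟨b', g', hb, hg, hmem⟩⟩
    · exact transfer' H hmul hg hb hmem
    · have h1 : b⁻¹ * g ∈ U := transfer' H hmul hb hg hmem
      rw [← hinv, Set.mem_inv]
      simpa [mul_inv_rev] using h1
  · intro h
    refine ⟨?_, Or.inl ⟨g, b, rfl, rfl, h⟩⟩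
    intro heq
    have hH : g⁻¹ * b ∈ (H : Set G) := QuotientGroup.eq.mp heq
    have : g⁻¹ * b ∈ (H : Set G) ∩ U := ⟨hH, h⟩
    rw [hdisj] at this
    exact this

private lemma mem_C_iff' (H A : Subgroup G) (hHA : H ≤ A) (g : G) :
    (∃ a ∈ A, (QuotientGroup.mk a : G ⧸ H) = QuotientGroup.mk g) ↔ g ∈ A := by
  constructor
  · rintro ⟨a, ha, h⟩
    have h1 : a⁻¹ * g ∈ H := QuotientGroup.eq.mp h
    have := A.mul_mem ha (hHA h1)
    simpa using this
  · exact fun h => ⟨g, h, rfl⟩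

private lemma nbhd_eq' (H A : Subgroup G) {U : Set G}
    (hU : IsCosetGraphConnectionSet H U) (g : G) :
    {w : G ⧸ H | w ∈ {C : G ⧸ H | ∃ a ∈ A, QuotientGroup.mk a = C} ∧
        (cosetGraph H U).Adj (QuotientGroup.mk g) w}
      = QuotientGroup.mk '' ((A : Set G) ∩ g • U) := by
  ext w
  obtain ⟨b, rfl⟩ := QuotientGroup.mk_surjective w
  simp only [Set.mem_setOf_eq, Set.mem_image]
  constructor
  · rintro ⟨⟨a, ha, hab⟩, hadj⟩
    rw [← hab] at hadj
    refine ⟨a, ⟨ha, ?_⟩, hab⟩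
    rw [Set.mem_smul_set_iff_inv_smul_mem, smul_eq_mul]
    exact (adj_iff' H U hU g a).mp hadj
  · rintro ⟨a, ⟨ha, hmem⟩, heq⟩
    rw [Set.mem_smul_set_iff_inv_smul_mem, smul_eq_mul] at hmem
    rw [← heq]
    exact ⟨⟨a, ha, rfl⟩, (adj_iff' H U hU g a).mpr hmem⟩

private lemma image_smul_mk' (H : Subgroup G) (g : G) (S : Set G) :
    (QuotientGroup.mk '' (g • S) : Set (G ⧸ H)) = g • (QuotientGroup.mk '' S) := by
  rw [← Set.image_smul, ← Set.image_smul, Set.image_image, Set.image_image]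
  apply Set.image_congr'
  intro x
  exact (MulAction.Quotient.smul_mk H g x).symm

private lemma card_eq' (H A : Subgroup G) (U : Set G) (g : G) :
    (QuotientGroup.mk '' ((A : Set G) ∩ g • U) : Set (G ⧸ H)).ncard
      = (QuotientGroup.mk '' (U ∩ g⁻¹ • (A : Set G)) : Set (G ⧸ H)).ncard := by
  have h1 : (A : Set G) ∩ g • U = g • (U ∩ g⁻¹ • (A : Set G)) := by
    rw [Set.smul_set_inter, smul_inv_smul, Set.inter_comm]
  rw [h1, image_smul_mk', Set.ncard_smul_set]

private lemma closed_eq_preimage' (H : Subgroup G) {S : Set G}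
    (hS : ∀ x ∈ S, ∀ h ∈ H, x * h ∈ S) :
    S = {g : G | (QuotientGroup.mk g : G ⧸ H) ∈ QuotientGroup.mk '' S} := by
  ext g
  simp only [Set.mem_setOf_eq, Set.mem_image]
  constructor
  · exact fun h => ⟨g, h, rfl⟩
  · rintro ⟨x, hx, he⟩
    have h1 : x⁻¹ * g ∈ H := QuotientGroup.eq.mp he
    have := hS x hx _ h1
    simpa using this

end AuxLemmas
/-- **Theorem A.** Let `H ≤ A ≤ G`. Then `A` is an `(r,s)`-regular set of `(G,H)` iff
there is a subset `X ⊆ G` with `XH = HX⁻¹` such that `XH ∩ A` is a union of exactly `r`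
distinct left cosets of `H`, none of which is `H` itself, and for every `t ∈ G∖A` the set
`XH ∩ tA` is a union of exactly `s` distinct left cosets of `H`. -/
theorem theoremA {G : Type*} [Group G] [Fintype G] (H A : Subgroup G) (hHA : H ≤ A)
    (r s : ℕ) :
    IsRegularSetOfPair H A r s ↔
      ∃ X : Set G,
        X * (H : Set G) = (H : Set G) * X⁻¹ ∧
        (∃ T : Set (G ⧸ H), T.ncard = r ∧ (QuotientGroup.mk (1 : G) : G ⧸ H) ∉ T ∧
          X * (H : Set G) ∩ (A : Set G) = {g : G | QuotientGroup.mk g ∈ T}) ∧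
        (∀ t : G, t ∉ A → ∃ T : Set (G ⧸ H), T.ncard = s ∧
          X * (H : Set G) ∩ (t • (A : Set G)) = {g : G | QuotientGroup.mk g ∈ T}) := by
  constructor
  · rintro ⟨U, hU, hreg⟩
    obtain ⟨hinv, hdisj, hmul⟩ := hU
    have hUH : U * (H : Set G) = U := by
      apply subset_antisymm
      · rintro x ⟨u, hu, h, hh, rfl⟩
        have hm : (1 : G) * u * h ∈ (H : Set G) * U * H :=
          Set.mul_mem_mul (Set.mul_mem_mul H.one_mem hu) hh
        rw [hmul] at hm
        simpa using hm
      · intro u hu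
        exact ⟨u, hu, 1, H.one_mem, mul_one u⟩
    have hHU : (H : Set G) * U = U := by
      apply subset_antisymm
      · rintro x ⟨h, hh, u, hu, rfl⟩
        have hm : h * u * (1 : G) ∈ (H : Set G) * U * H :=
          Set.mul_mem_mul (Set.mul_mem_mul hh hu) H.one_mem
        rw [hmul] at hm
        simpa using hm
      · intro u hu
        exact ⟨1, H.one_mem, u, hu, one_mul u⟩
    have key : ∀ g : G,
        {w : G ⧸ H | w ∈ {C : G ⧸ H | ∃ a ∈ A, QuotientGroup.mk a = C} ∧
            (cosetGraph H U).Adj (QuotientGroup.mk g) w}.ncard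
          = (QuotientGroup.mk '' (U ∩ g⁻¹ • (A : Set G)) : Set (G ⧸ H)).ncard := by
      intro g
      rw [nbhd_eq' H A ⟨hinv, hdisj, hmul⟩ g, card_eq']
    refine ⟨U, by rw [hUH, hinv, hHU], ?_, ?_⟩
    · refine ⟨QuotientGroup.mk '' (U ∩ (A : Set G)), ?_, ?_, ?_⟩
      · have h1 := hreg.1 (QuotientGroup.mk 1) ⟨1, A.one_mem, rfl⟩
        rw [key 1] at h1
        simpa using h1
      · rintro ⟨u, ⟨hu, huA⟩, he⟩
        have h1 : u⁻¹ * 1 ∈ H := QuotientGroup.eq.mp he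
        have h2 : u ∈ (H : Set G) := by
          have := H.inv_mem h1
          simpa using this
        have : u ∈ (H : Set G) ∩ U := ⟨h2, hu⟩
        rw [hdisj] at this
        exact this
      · rw [hUH]
        apply closed_eq_preimage'
        rintro x ⟨hxU, hxA⟩ h hh
        exact ⟨hUH ▸ Set.mul_mem_mul hxU hh, A.mul_mem hxA (hHA hh)⟩
    · intro t ht
      refine ⟨QuotientGroup.mk '' (U ∩ t • (A : Set G)), ?_, ?_⟩
      · have hnotC : (QuotientGroup.mk t⁻¹ : G ⧸ H) ∉
            {C : G ⧸ H | ∃ a ∈ A, QuotientGroup.mk a = C} := by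
          intro hc
          have := (mem_C_iff' H A hHA t⁻¹).mp hc
          exact ht (by simpa using A.inv_mem this)
        have h1 := hreg.2 (QuotientGroup.mk t⁻¹) hnotC
        rw [key t⁻¹] at h1
        simpa using h1
      · rw [hUH]
        apply closed_eq_preimage'
        rintro x ⟨hxU, hxA⟩ h hh
        refine ⟨hUH ▸ Set.mul_mem_mul hxU hh, ?_⟩
        obtain ⟨a, ha, rfl⟩ := hxA
        exact ⟨a * h, A.mul_mem ha (hHA hh), by simp [mul_assoc]⟩
  · rintro ⟨X, hX, ⟨T, hTr, hT1, hTeq⟩, hs⟩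
    have hUinv : (X * (H : Set G))⁻¹ = X * (H : Set G) := by
      rw [mul_inv_rev, inv_coe_set, ← hX]
    have hUH : (X * (H : Set G)) * H = X * (H : Set G) := by
      rw [mul_assoc, coe_mul_self' H]
    have hHU : (H : Set G) * (X * (H : Set G)) = X * (H : Set G) := by
      rw [hX, ← mul_assoc, coe_mul_self' H]
    have hmul : (H : Set G) * (X * (H : Set G)) * H = X * (H : Set G) := by
      rw [hHU, hUH]
    have hdisj : (H : Set G) ∩ (X * (H : Set G)) = ∅ := by
      rw [Set.eq_empty_iff_forall_notMem]
      rintro x ⟨hxH, hxU⟩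
      have hxA : x ∈ (A : Set G) := hHA hxH
      have : x ∈ X * (H : Set G) ∩ (A : Set G) := ⟨hxU, hxA⟩
      rw [hTeq] at this
      have he : (QuotientGroup.mk (1 : G) : G ⧸ H) = QuotientGroup.mk x :=
        QuotientGroup.eq.mpr (by simpa using hxH)
      exact hT1 (he ▸ this)
    have hUconn : IsCosetGraphConnectionSet H (X * (H : Set G)) := ⟨hUinv, hdisj, hmul⟩
    refine ⟨X * (H : Set G), hUconn, ?_, ?_⟩
    · rintro v ⟨a, ha, rfl⟩
      rw [nbhd_eq' H A hUconn a, card_eq']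
      have hA : a⁻¹ • (A : Set G) = A := smul_coe_set (A.inv_mem ha)
      rw [hA, hTeq]
      have himg : QuotientGroup.mk '' {g : G | (QuotientGroup.mk g : G ⧸ H) ∈ T} = T :=
        Set.image_preimage_eq T QuotientGroup.mk_surjective
      rw [himg]
      exact hTr
    · intro v hv
      obtain ⟨t, rfl⟩ := QuotientGroup.mk_surjective v
      have htA : t ∉ A := fun h => hv ((mem_C_iff' H A hHA t).mpr h)
      obtain ⟨T', hT's, hT'eq⟩ := hs t⁻¹ (fun h => htA (by simpa using A.inv_mem h))
      rw [nbhd_eq' H A hUconn t, card_eq', hT'eq]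
      have himg : QuotientGroup.mk '' {g : G | (QuotientGroup.mk g : G ⧸ H) ∈ T'} = T' :=
        Set.image_preimage_eq T' QuotientGroup.mk_surjective
      rw [himg]
      exact hT's
end

section
/- Let G be a finite group, A ⊴ G a normal subgroup, and let r, s be integers with 0 ≤ r ≤ |A| − 1 and 0 ≤ s ≤ |A|, such that gcd(2, |A| − 1) divides r. If s is even, then A is an (r,s)-regular set of G. -/
open scoped Pointwise

lemma exists_inv_closed' {G : Type*} [Group G] [DecidableEq G] :
    ∀ (n : ℕ) (X : Finset G), (∀ x ∈ X, x⁻¹ ∈ X) → n ≤ X.card →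
      (Even n ∨ ∃ x ∈ X, x⁻¹ = x) →
      ∃ S ⊆ X, S.card = n ∧ ∀ x ∈ S, x⁻¹ ∈ S := by
  intro n
  induction n using Nat.strong_induction_on with
  | _ n ih =>
  intro X hXinv hn h
  rcases Nat.eq_zero_or_pos n with hn0 | hnpos
  · exact ⟨∅, Finset.empty_subset _, by simp [hn0], by simp⟩
  by_cases heven : Even n
  · by_cases hfix : ∀ x ∈ X, x⁻¹ = x
    · obtain ⟨S, hS, hScard⟩ := Finset.exists_subset_card_eq hn
      exact ⟨S, hS, hScard, fun x hx => by rw [hfix x (hS hx)]; exact hx⟩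
    · push_neg at hfix
      obtain ⟨x, hxX, hx⟩ := hfix
      have hxinv : x⁻¹ ∈ X := hXinv x hxX
      set X' := (X.erase x).erase x⁻¹ with hX'
      have hX'inv : ∀ y ∈ X', y⁻¹ ∈ X' := by
        intro y hy
        rw [hX', Finset.mem_erase, Finset.mem_erase] at hy
        refine Finset.mem_erase.mpr ⟨fun hc => hy.2.1 (inv_injective hc),
          Finset.mem_erase.mpr ⟨fun hc => hy.1 (by rw [← hc, inv_inv]), hXinv y hy.2.2⟩⟩
      have hcard' : X'.card = X.card - 2 := by
        rw [hX', Finset.card_erase_of_mem, Finset.card_erase_of_mem hxX]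
        · omega
        · exact Finset.mem_erase.mpr ⟨hx, hxinv⟩
      have hn2 : 2 ≤ n := by
        rcases heven with ⟨k, hk⟩; omega
      obtain ⟨S, hS, hScard, hSinv⟩ := ih (n - 2) (by omega) X' hX'inv
        (by omega) (Or.inl (by rcases heven with ⟨k, hk⟩; exact ⟨k - 1, by omega⟩))
      refine ⟨insert x (insert x⁻¹ S), ?_, ?_, ?_⟩
      · intro y hy
        simp only [Finset.mem_insert] at hy
        rcases hy with rfl | rfl | hy
        · exact hxX
        · exact hxinv
        · exact (Finset.erase_subset _ _) ((Finset.erase_subset _ _) (hS hy))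
      · have hxS : x ∉ insert x⁻¹ S := by
          simp only [Finset.mem_insert]
          rintro (hc | hc)
          · exact hx hc.symm
          · have := hS hc
            rw [hX', Finset.mem_erase, Finset.mem_erase] at this
            exact this.2.1 rfl
        have hxiS : x⁻¹ ∉ S := by
          intro hc; have := hS hc
          rw [hX', Finset.mem_erase, Finset.mem_erase] at this
          exact this.1 rfl
        rw [Finset.card_insert_of_notMem hxS, Finset.card_insert_of_notMem hxiS, hScard]
        omega
      · intro y hy
        simp only [Finset.mem_insert] at hy ⊢
        rcases hy with rfl | rfl | hy
        · right; left; rfl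
        · left; rw [inv_inv]
        · right; right; exact hSinv y hy
  · obtain ⟨x, hxX, hx⟩ := h.resolve_left heven
    have hX'inv : ∀ y ∈ X.erase x, y⁻¹ ∈ X.erase x := by
      intro y hy
      rw [Finset.mem_erase] at hy ⊢
      refine ⟨?_, hXinv y hy.2⟩
      intro hc; apply hy.1; rw [← hx, ← hc, inv_inv]
    obtain ⟨S, hS, hScard, hSinv⟩ := ih (n - 1) (by omega) (X.erase x) hX'inv
      (by rw [Finset.card_erase_of_mem hxX]; omega)
      (Or.inl (by rcases Nat.even_or_odd n with he | ⟨k, hk⟩; exact absurd he heven; exact ⟨k, by omega⟩))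
    have hxS : x ∉ S := fun hc => (Finset.mem_erase.mp (hS hc)).1 rfl
    refine ⟨insert x S, ?_, ?_, ?_⟩
    · intro y hy
      rcases Finset.mem_insert.mp hy with rfl | hy
      · exact hxX
      · exact Finset.erase_subset _ _ (hS hy)
    · rw [Finset.card_insert_of_notMem hxS, hScard]; omega
    · intro y hy
      rcases Finset.mem_insert.mp hy with rfl | hy
      · rw [hx]; exact Finset.mem_insert_self _ _
      · exact Finset.mem_insert_of_mem (hSinv y hy)

/-- **Corollary B1(a).** Let `A ⊴ G`, `0 ≤ r ≤ |A| − 1`, `0 ≤ s ≤ |A|`, with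
`gcd(2, |A| − 1)` dividing `r`. If `s` is even, then `A` is an `(r,s)`-regular set of `G`. -/
theorem corollaryB1a {G : Type*} [Group G] [Fintype G] (A : Subgroup G) (hA : A.Normal)
    (r s : ℕ) (hr : r ≤ Nat.card ↥A - 1) (hs : s ≤ Nat.card ↥A)
    (hgcd : Nat.gcd 2 (Nat.card ↥A - 1) ∣ r) (hseven : Even s) :
    IsRegularSetOfGroup A r s := by
  classical
  haveI := hA
  set N := Nat.card ↥A with hN
  have hNpos : 0 < N := Nat.card_pos
  letI : Fintype (G ⧸ A) := Fintype.ofFinite _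
  letI : LinearOrder (G ⧸ A) := LinearOrder.lift' (Fintype.equivFin (G ⧸ A)) (Equiv.injective _)
  set fib : (G ⧸ A) → Finset G :=
    fun q => Finset.univ.filter (fun g => (QuotientGroup.mk g : G ⧸ A) = q) with hfib
  have hmemfib : ∀ (g : G) (q), g ∈ fib q ↔ (QuotientGroup.mk g : G ⧸ A) = q := by
    intro g q; simp [hfib]
  have hfibcard : ∀ q, (fib q).card = N := by
    intro q
    obtain ⟨g₀, hg₀⟩ := QuotientGroup.mk_surjective q
    have hset : (fib q : Set G) = g₀ • (A : Set G) := by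
      ext x
      rw [Finset.mem_coe, hmemfib, Set.mem_smul_set_iff_inv_smul_mem, ← hg₀, eq_comm,
        QuotientGroup.eq]
      rfl
    have h1 := Set.ncard_coe_finset (fib q)
    rw [hset, Set.ncard_smul_set] at h1
    rw [← h1, hN, ← Nat.card_coe_set_eq]
    rfl
  have hfibinv : ∀ (q) (x : G), x ∈ fib q → x⁻¹ ∈ fib q⁻¹ := by
    intro q x hx
    rw [hmemfib] at hx ⊢
    rw [← hx]
    rfl
  -- the inside set W1
  have h1fib : (1:G) ∈ fib 1 := by rw [hmemfib]; simp
  have hW1ex : ∃ W1 ⊆ (fib 1).erase 1, W1.card = r ∧ ∀ x ∈ W1, x⁻¹ ∈ W1 := by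
    apply exists_inv_closed'
    · intro x hx
      rw [Finset.mem_erase] at hx ⊢
      refine ⟨fun hc => hx.1 (by rw [← inv_inv x, hc, inv_one]), ?_⟩
      have := hfibinv 1 x hx.2
      rwa [inv_one] at this
    · rw [Finset.card_erase_of_mem h1fib, hfibcard]
      exact hr
    · by_cases hpar : Even (N - 1)
      · left
        have h2 : (2:ℕ) ∣ N - 1 := hpar.two_dvd
        rw [Nat.gcd_eq_left h2] at hgcd
        exact (even_iff_two_dvd).mpr hgcd
      · right
        have hNeven : (2:ℕ) ∣ N := by
          have := Nat.not_even_iff.mp hpar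
          omega
        have hcard2 : (2:ℕ) ∣ Fintype.card ↥A := by
          rwa [← Nat.card_eq_fintype_card]
        obtain ⟨a, ha⟩ := exists_prime_orderOf_dvd_card 2 hcard2
        have ha1 : a ≠ 1 := by
          intro hc; rw [hc, orderOf_one] at ha; omega
        have hasq : a * a = 1 := by
          have := pow_orderOf_eq_one a
          rwa [ha, pow_two] at this
        refine ⟨(a : G), ?_, ?_⟩
        · rw [Finset.mem_erase, hmemfib]
          refine ⟨?_, (QuotientGroup.eq_one_iff (a:G)).mpr a.2⟩
          intro hc
          apply ha1
          ext
          exact hc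
        · have : (a:G) * (a:G) = 1 := by
            rw [← Subgroup.coe_mul, hasq, Subgroup.coe_one]
          exact inv_eq_of_mul_eq_one_right this
  obtain ⟨W1, hW1sub, hW1card, hW1inv⟩ := hW1ex
  -- the s-sets on nontrivial fibers
  have hSex : ∀ q : G ⧸ A, ∃ S : Finset G, S ⊆ fib q ∧ S.card = s ∧
      (q⁻¹ = q → ∀ x ∈ S, x⁻¹ ∈ S) := by
    intro q
    by_cases hq : q⁻¹ = q
    · obtain ⟨S, hsub, hcard, hinv⟩ := exists_inv_closed' s (fib q)
        (fun x hx => hq ▸ hfibinv q x hx) (by rw [hfibcard]; exact hs) (Or.inl hseven)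
      exact ⟨S, hsub, hcard, fun _ => hinv⟩
    · obtain ⟨S, hsub, hcard⟩ := Finset.exists_subset_card_eq
        (show s ≤ (fib q).card by rw [hfibcard]; exact hs)
      exact ⟨S, hsub, hcard, fun h => absurd h hq⟩
  choose S hSsub hScard hSinv using hSex
  set W : (G ⧸ A) → Finset G := fun q =>
    if q = 1 then W1
    else if q⁻¹ = q then S q
    else if q < q⁻¹ then S q
    else (S q⁻¹).image (·⁻¹) with hW
  have hW1def : W 1 = W1 := by simp [hW]
  have hWsymdef : ∀ q, q ≠ 1 → q⁻¹ = q → W q = S q := by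
    intro q h1 h2; simp [hW, h1, h2]
  have hWltdef : ∀ q, q ≠ 1 → q⁻¹ ≠ q → q < q⁻¹ → W q = S q := by
    intro q h1 h2 h3; simp [hW, h1, h2, h3]
  have hWgtdef : ∀ q, q ≠ 1 → q⁻¹ ≠ q → ¬(q < q⁻¹) → W q = (S q⁻¹).image (·⁻¹) := by
    intro q h1 h2 h3; simp [hW, h1, h2, h3]
  have hinvne1 : ∀ q : G ⧸ A, q ≠ 1 → q⁻¹ ≠ 1 := by
    intro q h hc; exact h (by rw [← inv_inv q, hc, inv_one])
  have hWsub : ∀ q, W q ⊆ fib q := by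
    intro q
    by_cases h1 : q = 1
    · subst h1; rw [hW1def]
      exact hW1sub.trans (Finset.erase_subset _ _)
    by_cases h2 : q⁻¹ = q
    · rw [hWsymdef q h1 h2]; exact hSsub q
    by_cases h3 : q < q⁻¹
    · rw [hWltdef q h1 h2 h3]; exact hSsub q
    · rw [hWgtdef q h1 h2 h3]
      intro x hx
      obtain ⟨y, hy, rfl⟩ := Finset.mem_image.mp hx
      have := hfibinv q⁻¹ y (hSsub q⁻¹ hy)
      rwa [inv_inv] at this
  have hWcard1 : (W 1).card = r := by rw [hW1def]; exact hW1card
  have hWcards : ∀ q, q ≠ 1 → (W q).card = s := by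
    intro q h1
    by_cases h2 : q⁻¹ = q
    · rw [hWsymdef q h1 h2]; exact hScard q
    by_cases h3 : q < q⁻¹
    · rw [hWltdef q h1 h2 h3]; exact hScard q
    · rw [hWgtdef q h1 h2 h3, Finset.card_image_of_injective _ inv_injective]
      exact hScard q⁻¹
  have hWinv : ∀ (q) (x : G), x ∈ W q → x⁻¹ ∈ W q⁻¹ := by
    intro q x hx
    by_cases h1 : q = 1
    · subst h1
      rw [inv_one, hW1def] at *
      exact hW1inv x hx
    by_cases h2 : q⁻¹ = q
    · rw [hWsymdef q h1 h2] at hx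
      rw [h2, hWsymdef q h1 h2]
      exact hSinv q h2 x hx
    by_cases h3 : q < q⁻¹
    · rw [hWltdef q h1 h2 h3] at hx
      rw [hWgtdef q⁻¹ (hinvne1 q h1) (by rw [inv_inv]; exact fun hc => h2 hc.symm)
        (by rw [inv_inv]; exact lt_asymm h3), inv_inv]
      exact Finset.mem_image_of_mem _ hx
    · have h4 : q⁻¹ < q := lt_of_le_of_ne (not_lt.mp h3) h2
      rw [hWgtdef q h1 h2 h3] at hx
      obtain ⟨y, hy, rfl⟩ := Finset.mem_image.mp hx
      rw [hWltdef q⁻¹ (hinvne1 q h1) (by rw [inv_inv]; exact fun hc => h2 hc.symm)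
        (by rw [inv_inv]; exact h4), inv_inv]
      exact hy
  set U : Finset G := Finset.univ.biUnion W with hU
  have hmemU : ∀ x : G, x ∈ U ↔ x ∈ W (QuotientGroup.mk x) := by
    intro x
    simp only [hU, Finset.mem_biUnion, Finset.mem_univ, true_and]
    constructor
    · rintro ⟨q, hq⟩
      have hx := hWsub q hq
      rw [hmemfib] at hx
      subst hx
      exact hq
    · intro h; exact ⟨_, h⟩
  have h1U : (1:G) ∉ U := by
    rw [hmemU]
    have h1 : (QuotientGroup.mk (1:G) : G ⧸ A) = 1 := by simp
    rw [h1, hW1def]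
    intro hc
    exact (Finset.mem_erase.mp (hW1sub hc)).1 rfl
  have hUinv : ∀ x : G, x ∈ U → x⁻¹ ∈ U := by
    intro x hx
    rw [hmemU] at hx ⊢
    have h1 : (QuotientGroup.mk x⁻¹ : G ⧸ A) = (QuotientGroup.mk x : G ⧸ A)⁻¹ := rfl
    rw [h1]
    exact hWinv _ x hx
  -- the quotient by ⊥
  have hmkinj : Function.Injective (QuotientGroup.mk : G → G ⧸ (⊥ : Subgroup G)) := by
    intro a b h
    have h2 := QuotientGroup.eq.mp h
    rw [Subgroup.mem_bot] at h2
    exact inv_mul_eq_one.mp h2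
  have hadj : ∀ x y : G,
      (cosetGraph (⊥ : Subgroup G) (↑U : Set G)).Adj (QuotientGroup.mk x) (QuotientGroup.mk y)
        ↔ x⁻¹ * y ∈ U := by
    intro x y
    simp only [cosetGraph, SimpleGraph.fromRel_adj, Finset.mem_coe]
    constructor
    · rintro ⟨hne, h | h⟩
      · obtain ⟨g₁, g₂, h1, h2, hUm⟩ := h
        have e1 := hmkinj h1; have e2 := hmkinj h2
        subst e1; subst e2
        exact hUm
      · obtain ⟨g₁, g₂, h1, h2, hUm⟩ := h
        have e1 := hmkinj h1; have e2 := hmkinj h2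
        subst e1; subst e2
        have := hUinv _ hUm
        rwa [mul_inv_rev, inv_inv] at this
    · intro h
      refine ⟨?_, Or.inl ⟨x, y, rfl, rfl, h⟩⟩
      intro hc
      have : x = y := hmkinj hc
      subst this
      rw [inv_mul_cancel] at h
      exact h1U h
  have hCmem : ∀ x : G,
      ((QuotientGroup.mk x : G ⧸ (⊥ : Subgroup G)) ∈
        {C : G ⧸ (⊥ : Subgroup G) | ∃ a ∈ A, QuotientGroup.mk a = C}) ↔ x ∈ A := by
    intro x
    simp only [Set.mem_setOf_eq]
    constructor
    · rintro ⟨a, ha, hax⟩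
      rwa [← hmkinj hax]
    · intro h; exact ⟨x, h, rfl⟩
  have hcount : ∀ x : G,
      {w | w ∈ {C : G ⧸ (⊥ : Subgroup G) | ∃ a ∈ A, QuotientGroup.mk a = C} ∧
        (cosetGraph (⊥ : Subgroup G) (↑U : Set G)).Adj (QuotientGroup.mk x) w}.ncard
      = (W (QuotientGroup.mk x : G ⧸ A)⁻¹).card := by
    intro x
    have himg : {w | w ∈ {C : G ⧸ (⊥ : Subgroup G) | ∃ a ∈ A, QuotientGroup.mk a = C} ∧
        (cosetGraph (⊥ : Subgroup G) (↑U : Set G)).Adj (QuotientGroup.mk x) w}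
        = QuotientGroup.mk '' {y : G | y ∈ A ∧ x⁻¹ * y ∈ U} := by
      ext w
      constructor
      · rintro ⟨hwC, hadjw⟩
        obtain ⟨y, rfl⟩ := QuotientGroup.mk_surjective w
        exact ⟨y, ⟨(hCmem y).mp hwC, (hadj x y).mp hadjw⟩, rfl⟩
      · rintro ⟨y, ⟨hyA, hyU⟩, rfl⟩
        exact ⟨(hCmem y).mpr hyA, (hadj x y).mpr hyU⟩
    rw [himg, Set.ncard_image_of_injective _ hmkinj]
    have hfin : {y : G | y ∈ A ∧ x⁻¹ * y ∈ U}
        = ↑(Finset.univ.filter (fun y : G => y ∈ A ∧ x⁻¹ * y ∈ U)) := by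
      ext y; simp
    rw [hfin, Set.ncard_coe_finset]
    apply Finset.card_bij (fun y _ => x⁻¹ * y)
    · intro y hy
      rw [Finset.mem_filter] at hy
      obtain ⟨-, hyA, hyU⟩ := hy
      rw [hmemU] at hyU
      have hq : (QuotientGroup.mk (x⁻¹ * y) : G ⧸ A) = (QuotientGroup.mk x : G ⧸ A)⁻¹ := by
        have hy1 : (QuotientGroup.mk y : G ⧸ A) = 1 := (QuotientGroup.eq_one_iff y).mpr hyA
        show (QuotientGroup.mk x : G ⧸ A)⁻¹ * QuotientGroup.mk y = _
        rw [hy1, mul_one]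
      rwa [hq] at hyU
    · intro y₁ h₁ y₂ h₂ h
      exact mul_left_cancel h
    · intro u hu
      refine ⟨x * u, ?_, ?_⟩
      · rw [Finset.mem_filter]
        have hqu : (QuotientGroup.mk u : G ⧸ A) = (QuotientGroup.mk x : G ⧸ A)⁻¹ := by
          have := hWsub _ hu
          rwa [hmemfib] at this
        refine ⟨Finset.mem_univ _, ?_, ?_⟩
        · rw [← QuotientGroup.eq_one_iff (x * u)]
          show (QuotientGroup.mk x : G ⧸ A) * QuotientGroup.mk u = 1
          rw [hqu, mul_inv_cancel]
        · rw [inv_mul_cancel_left, hmemU, hqu]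
          exact hu
      · rw [inv_mul_cancel_left]
  refine ⟨(↑U : Set G), ⟨?_, ?_, ?_⟩, ?_, ?_⟩
  · ext x
    simp only [Set.mem_inv, Finset.mem_coe]
    exact ⟨fun h => by rw [← inv_inv x]; exact hUinv _ h, fun h => hUinv _ h⟩
  · rw [Subgroup.coe_bot, Set.eq_empty_iff_forall_notMem]
    rintro x ⟨hx1, hxU⟩
    rw [Set.mem_singleton_iff] at hx1
    subst hx1
    exact h1U hxU
  · rw [Subgroup.coe_bot, Set.singleton_one, one_mul, mul_one]
  · intro v hv
    obtain ⟨x, rfl⟩ := QuotientGroup.mk_surjective v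
    rw [hcount x]
    have hx : x ∈ A := (hCmem x).mp hv
    have h1 : (QuotientGroup.mk x : G ⧸ A) = 1 := (QuotientGroup.eq_one_iff x).mpr hx
    rw [h1, inv_one]
    exact hWcard1
  · intro v hv
    obtain ⟨x, rfl⟩ := QuotientGroup.mk_surjective v
    rw [hcount x]
    have hx : x ∉ A := fun h => hv ((hCmem x).mpr h)
    have h1 : (QuotientGroup.mk x : G ⧸ A) ≠ 1 := fun h => hx ((QuotientGroup.eq_one_iff x).mp h)
    exact hWcards _ (hinvne1 _ h1)
end

section
/- Let G be a finite group, A ⊴ G a normal subgroup, and let r, s be integers with 0 ≤ r ≤ |A| − 1 and 0 ≤ s ≤ |A|, such that gcd(2, |A| − 1) divides r. If s is odd, then A is an (r,s)-regular set of G if and only if for every x ∈ G∖A with x² ∈ A, the coset xA contains an involution (an element of order 2). -/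
open scoped Pointwise

/-- A fixed-point-free involution on a finite set forces even cardinality. -/
theorem myEvenCard {α : Type*} [DecidableEq α] (f : α → α) (S : Finset α)
    (hmaps : ∀ a ∈ S, f a ∈ S) (hinv : ∀ a ∈ S, f (f a) = a) (hne : ∀ a ∈ S, f a ≠ a) :
    Even S.card := by
  induction S using Finset.strongInduction with
  | _ S ih =>
    rcases S.eq_empty_or_nonempty with rfl | ⟨a, ha⟩
    · simp
    · have hfa : f a ∈ S := hmaps a ha
      have hne' : f a ≠ a := hne a ha
      set T := (S.erase a).erase (f a) with hT
      have hTsub : T ⊆ S := (Finset.erase_subset _ _).trans (Finset.erase_subset _ _)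
      have hTss : T ⊂ S := Finset.ssubset_of_ssubset_of_subset
        (Finset.erase_ssubset (Finset.mem_erase.2 ⟨hne', hfa⟩)) (Finset.erase_subset _ _)
      have hmem : ∀ b, b ∈ T ↔ b ∈ S ∧ b ≠ a ∧ b ≠ f a := by
        intro b
        simp only [hT, Finset.mem_erase]
        tauto
      have hT2 : Even T.card := by
        refine ih T hTss (fun b hb => ?_) (fun b hb => hinv b (hTsub hb))
          (fun b hb => hne b (hTsub hb))
        rcases (hmem b).1 hb with ⟨hbS, hba, hbfa⟩
        refine (hmem (f b)).2 ⟨hmaps b hbS, ?_, ?_⟩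
        · intro h; exact hbfa (by rw [← h, hinv b hbS])
        · intro h
          have := hinv b hbS
          rw [h, hinv a ha] at this
          exact hba this.symm
      have hcard : S.card = T.card + 2 := by
        have h1 : (S.erase a).card = S.card - 1 := Finset.card_erase_of_mem ha
        have h2 : T.card = (S.erase a).card - 1 :=
          Finset.card_erase_of_mem (Finset.mem_erase.2 ⟨hne', hfa⟩)
        have hpos : 0 < S.card := Finset.card_pos.2 ⟨a, ha⟩
        have hpos2 : 1 < S.card := Finset.one_lt_card.2 ⟨a, ha, f a, hfa, fun h => hne' h.symm⟩
        omega
      rw [hcard]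
      rcases hT2 with ⟨k, hk⟩
      exact ⟨k + 1, by omega⟩

theorem myOddFixed {α : Type*} [DecidableEq α] (f : α → α) (S : Finset α)
    (hmaps : ∀ a ∈ S, f a ∈ S) (hinv : ∀ a ∈ S, f (f a) = a) (hodd : Odd S.card) :
    ∃ a ∈ S, f a = a := by
  by_contra h
  push_neg at h
  exact (Nat.not_even_iff_odd.2 hodd) (myEvenCard f S hmaps hinv h)

/-- One can choose an `f`-closed subset of any size of an `f`-closed finite set,
provided an `f`-fixed point is available when the size is odd. -/
theorem myLemE {α : Type*} [DecidableEq α] (f : α → α) (hinv : ∀ a, f (f a) = a) :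
    ∀ n (W : Finset α), (∀ a ∈ W, f a ∈ W) → n ≤ W.card → (Odd n → ∃ a ∈ W, f a = a) →
    ∃ S ⊆ W, S.card = n ∧ ∀ a ∈ S, f a ∈ S := by
  intro n
  induction n using Nat.strong_induction_on with
  | _ n ih =>
    intro W hW hn hodd
    rcases Nat.eq_zero_or_pos n with rfl | hpos
    · exact ⟨∅, Finset.empty_subset _, rfl, by simp⟩
    rcases Nat.even_or_odd n with heven | hoddn
    · -- n even, n ≥ 2
      have h2 : 2 ≤ n := by rcases heven with ⟨k, hk⟩; omega
      have hW2 : 2 ≤ W.card := le_trans h2 hn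
      by_cases hex : ∃ a ∈ W, f a ≠ a
      · rcases hex with ⟨a, ha, hfa⟩
        have hfaW : f a ∈ W := hW a ha
        set T := (W.erase a).erase (f a) with hT
        have hmem : ∀ b, b ∈ T ↔ b ∈ W ∧ b ≠ a ∧ b ≠ f a := by
          intro b; simp only [hT, Finset.mem_erase]; tauto
        have hTcard : T.card = W.card - 2 := by
          have h1 : (W.erase a).card = W.card - 1 := Finset.card_erase_of_mem ha
          have h2' : T.card = (W.erase a).card - 1 :=
            Finset.card_erase_of_mem (Finset.mem_erase.2 ⟨hfa, hfaW⟩)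
          omega
        obtain ⟨S, hSsub, hScard, hSclosed⟩ := ih (n - 2) (by omega) T
          (fun b hb => by
            rcases (hmem b).1 hb with ⟨hbW, hba, hbfa⟩
            refine (hmem (f b)).2 ⟨hW b hbW, ?_, ?_⟩
            · intro h; exact hbfa (by rw [← h, hinv b])
            · intro h; exact hba (by have := hinv b; rw [h, hinv a] at this; exact this.symm))
          (by omega)
          (fun h => ((Nat.not_odd_iff_even.2 (by rcases heven with ⟨k, hk⟩; exact ⟨k - 1, by omega⟩)) h).elim)
        refine ⟨insert a (insert (f a) S), ?_, ?_, ?_⟩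
        · intro b hb
          rcases Finset.mem_insert.1 hb with rfl | hb
          · exact ha
          rcases Finset.mem_insert.1 hb with rfl | hb
          · exact hfaW
          · exact ((hmem b).1 (hSsub hb)).1
        · have haS : a ∉ insert (f a) S := by
            intro h
            rcases Finset.mem_insert.1 h with h | h
            · exact hfa h.symm
            · exact ((hmem a).1 (hSsub h)).2.1 rfl
          have hfaS : f a ∉ S := fun h => ((hmem (f a)).1 (hSsub h)).2.2 rfl
          rw [Finset.card_insert_of_notMem haS, Finset.card_insert_of_notMem hfaS, hScard]
          omega
        · intro b hb
          rcases Finset.mem_insert.1 hb with rfl | hb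
          · exact Finset.mem_insert_of_mem (Finset.mem_insert_self _ _)
          rcases Finset.mem_insert.1 hb with rfl | hb
          · rw [hinv]; exact Finset.mem_insert_self _ _
          · exact Finset.mem_insert_of_mem (Finset.mem_insert_of_mem (hSclosed b hb))
      · -- all elements of W are fixed points
        push_neg at hex
        obtain ⟨S, hSsub, hScard⟩ := Finset.exists_subset_card_eq hn
        exact ⟨S, hSsub, hScard, fun a ha => by rw [hex a (hSsub ha)]; exact ha⟩
    · -- n odd
      obtain ⟨a, ha, hfa⟩ := hodd hoddn
      obtain ⟨S, hSsub, hScard, hSclosed⟩ := ih (n - 1) (by omega) (W.erase a)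
        (fun b hb => by
          rcases Finset.mem_erase.1 hb with ⟨hba, hbW⟩
          refine Finset.mem_erase.2 ⟨?_, hW b hbW⟩
          intro h; exact hba (by rw [← hinv b, h, hfa]))
        (by rw [Finset.card_erase_of_mem ha]; omega)
        (fun h => ((Nat.not_odd_iff_even.2 (by rcases hoddn with ⟨k, hk⟩; exact ⟨k, by omega⟩)) h).elim)
      refine ⟨insert a S, ?_, ?_, ?_⟩
      · intro b hb
        rcases Finset.mem_insert.1 hb with rfl | hb
        · exact ha
        · exact Finset.mem_of_mem_erase (hSsub hb)
      · have haS : a ∉ S := fun h => (Finset.mem_erase.1 (hSsub h)).1 rfl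
        rw [Finset.card_insert_of_notMem haS, hScard]; omega
      · intro b hb
        rcases Finset.mem_insert.1 hb with rfl | hb
        · rw [hfa]; exact Finset.mem_insert_self _ _
        · exact Finset.mem_insert_of_mem (hSclosed b hb)

theorem myMkBotInj {G : Type*} [Group G] :
    Function.Injective (QuotientGroup.mk : G → G ⧸ (⊥ : Subgroup G)) := by
  intro a b h
  have := (QuotientGroup.eq (s := (⊥ : Subgroup G))).1 h
  rw [Subgroup.mem_bot] at this
  exact inv_mul_eq_one.1 this

theorem myAdjBot {G : Type*} [Group G] (U : Set G) (hU : U⁻¹ = U) (h1 : (1 : G) ∉ U)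
    (g h : G) :
    (cosetGraph (⊥ : Subgroup G) U).Adj (QuotientGroup.mk g) (QuotientGroup.mk h) ↔
      g⁻¹ * h ∈ U := by
  unfold cosetGraph
  rw [SimpleGraph.fromRel_adj]
  constructor
  · rintro ⟨hne, ⟨g₁, g₂, e1, e2, hmem⟩ | ⟨g₁, g₂, e1, e2, hmem⟩⟩
    · rwa [myMkBotInj e1, myMkBotInj e2] at hmem
    · rw [myMkBotInj e1, myMkBotInj e2] at hmem
      have : (h⁻¹ * g)⁻¹ ∈ U⁻¹ := Set.inv_mem_inv.2 hmem
      rwa [hU, mul_inv_rev, inv_inv] at this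
  · intro hmem
    refine ⟨?_, Or.inl ⟨g, h, rfl, rfl, hmem⟩⟩
    intro he
    have : g = h := myMkBotInj he
    subst this
    rw [inv_mul_cancel] at hmem
    exact h1 hmem

theorem myReduce {G : Type*} [Group G] (A : Subgroup G) (r s : ℕ) :
    IsRegularSetOfGroup A r s ↔
      ∃ U : Set G, U⁻¹ = U ∧ (1 : G) ∉ U ∧
        (∀ g ∈ A, {a : G | a ∈ A ∧ g⁻¹ * a ∈ U}.ncard = r) ∧
        (∀ g ∉ A, {a : G | a ∈ A ∧ g⁻¹ * a ∈ U}.ncard = s) := by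
  have hC : ∀ (U : Set G) (g : G),
      ((QuotientGroup.mk g : G ⧸ (⊥ : Subgroup G)) ∈
        {C : G ⧸ (⊥ : Subgroup G) | ∃ a ∈ A, QuotientGroup.mk a = C}) ↔ g ∈ A := by
    intro U g
    constructor
    · rintro ⟨a, ha, hae⟩
      rwa [myMkBotInj hae] at ha
    · intro hg; exact ⟨g, hg, rfl⟩
  have hset : ∀ (U : Set G), U⁻¹ = U → (1 : G) ∉ U → ∀ g : G,
      {w | w ∈ {C : G ⧸ (⊥ : Subgroup G) | ∃ a ∈ A, QuotientGroup.mk a = C} ∧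
        (cosetGraph (⊥ : Subgroup G) U).Adj (QuotientGroup.mk g) w} =
      QuotientGroup.mk '' {a : G | a ∈ A ∧ g⁻¹ * a ∈ U} := by
    intro U hU h1 g
    ext w
    obtain ⟨b, rfl⟩ := QuotientGroup.mk_surjective w
    simp only [Set.mem_setOf_eq, Set.mem_image]
    constructor
    · rintro ⟨hb, hadj⟩
      have hb' : b ∈ A := by
        rcases hb with ⟨a, ha, hae⟩
        rwa [myMkBotInj hae] at ha
      exact ⟨b, ⟨hb', (myAdjBot U hU h1 g b).1 hadj⟩, rfl⟩
    · rintro ⟨a, ⟨ha, hau⟩, hae⟩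
      have := myMkBotInj hae
      subst this
      exact ⟨(hC U a).2 ha, (myAdjBot U hU h1 g a).2 hau⟩
  have hcount : ∀ (U : Set G), U⁻¹ = U → (1 : G) ∉ U → ∀ g : G,
      {w | w ∈ {C : G ⧸ (⊥ : Subgroup G) | ∃ a ∈ A, QuotientGroup.mk a = C} ∧
        (cosetGraph (⊥ : Subgroup G) U).Adj (QuotientGroup.mk g) w}.ncard =
      {a : G | a ∈ A ∧ g⁻¹ * a ∈ U}.ncard := by
    intro U hU h1 g
    rw [hset U hU h1 g, Set.ncard_image_of_injective _ myMkBotInj]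
  constructor
  · rintro ⟨U, ⟨hU, hdisj, -⟩, hreg1, hreg2⟩
    have h1 : (1 : G) ∉ U := by
      intro h
      have : (1 : G) ∈ (↑(⊥ : Subgroup G) : Set G) ∩ U := ⟨Subgroup.one_mem _, h⟩
      rw [hdisj] at this
      exact this
    refine ⟨U, hU, h1, fun g hg => ?_, fun g hg => ?_⟩
    · rw [← hcount U hU h1 g]
      exact hreg1 _ ((hC U g).2 hg)
    · rw [← hcount U hU h1 g]
      exact hreg2 _ (fun h => hg ((hC U g).1 h))
  · rintro ⟨U, hU, h1, hcnt1, hcnt2⟩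
    refine ⟨U, ⟨hU, ?_, ?_⟩, ?_, ?_⟩
    · rw [Subgroup.coe_bot, Set.singleton_inter_eq_empty]
      exact h1
    · rw [Subgroup.coe_bot, Set.singleton_one, one_mul, mul_one]
    · intro v hv
      obtain ⟨g, rfl⟩ := QuotientGroup.mk_surjective v
      have hg : g ∈ A := (hC U g).1 hv
      rw [hcount U hU h1 g]
      exact hcnt1 g hg
    · intro v hv
      obtain ⟨g, rfl⟩ := QuotientGroup.mk_surjective v
      have hg : g ∉ A := fun h => hv ((hC U g).2 h)
      rw [hcount U hU h1 g]
      exact hcnt2 g hg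


theorem myForward {G : Type*} [Group G] [Fintype G] (A : Subgroup G) (hA : A.Normal)
    (s : ℕ) (hsodd : Odd s) (U : Set G) (hU : U⁻¹ = U) (h1 : (1 : G) ∉ U)
    (hcnt : ∀ g ∉ A, {a : G | a ∈ A ∧ g⁻¹ * a ∈ U}.ncard = s)
    (x : G) (hx : x ∉ A) (hx2 : x ^ 2 ∈ A) : ∃ a ∈ A, orderOf (x * a) = 2 := by
  classical
  set T := {a : G | a ∈ A ∧ x⁻¹ * a ∈ U} with hT
  have hTfin : T.Finite := Set.toFinite T
  have hcard : hTfin.toFinset.card = s := by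
    rw [← Set.ncard_eq_toFinset_card _ hTfin]
    exact hcnt x hx
  obtain ⟨a₀, ha₀, hfix⟩ := myOddFixed (fun a => x * a⁻¹ * x) hTfin.toFinset
    (by
      intro a ha
      rw [Set.Finite.mem_toFinset] at ha ⊢
      obtain ⟨haA, haU⟩ := ha
      show x * a⁻¹ * x ∈ A ∧ x⁻¹ * (x * a⁻¹ * x) ∈ U
      constructor
      · have he : x * a⁻¹ * x = (x * a⁻¹ * x⁻¹) * x ^ 2 := by group
        rw [he]
        exact A.mul_mem (hA.conj_mem _ (A.inv_mem haA) x) hx2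
      · have he : x⁻¹ * (x * a⁻¹ * x) = (x⁻¹ * a)⁻¹ := by group
        rw [he, ← hU]
        exact Set.inv_mem_inv.2 haU)
    (by intro a _; group)
    (by rw [hcard]; exact hsodd)
  rw [Set.Finite.mem_toFinset] at ha₀
  obtain ⟨ha₀A, ha₀U⟩ := ha₀
  have huinv : (x⁻¹ * a₀)⁻¹ = x⁻¹ * a₀ := by
    have hkey : a₀⁻¹ * x = x⁻¹ * a₀ := by
      apply mul_left_cancel (a := x)
      rw [← mul_assoc, hfix]
      group
    rw [mul_inv_rev, inv_inv, hkey]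
  have hune : x⁻¹ * a₀ ≠ 1 := fun h => h1 (h ▸ ha₀U)
  haveI : Fact (Nat.Prime 2) := ⟨Nat.prime_two⟩
  have horder : orderOf (x⁻¹ * a₀) = 2 := by
    apply orderOf_eq_prime _ hune
    rw [pow_two]
    nth_rewrite 2 [← huinv]
    rw [mul_inv_cancel]
  refine ⟨(x ^ 2)⁻¹ * a₀, A.mul_mem (A.inv_mem hx2) ha₀A, ?_⟩
  have he : x * ((x ^ 2)⁻¹ * a₀) = x⁻¹ * a₀ := by group
  rw [he]
  exact horder

theorem myConstruct {G : Type*} [Group G] [Fintype G] (A : Subgroup G) (hA : A.Normal)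
    (r s : ℕ) (hr : r ≤ Nat.card ↥A - 1) (hs : s ≤ Nat.card ↥A)
    (hgcd : Nat.gcd 2 (Nat.card ↥A - 1) ∣ r) (hsodd : Odd s)
    (hinvol : ∀ x : G, x ∉ A → x ^ 2 ∈ A → ∃ a ∈ A, orderOf (x * a) = 2) :
    ∃ U : Set G, U⁻¹ = U ∧ (1 : G) ∉ U ∧
      (∀ g ∈ A, {a : G | a ∈ A ∧ g⁻¹ * a ∈ U}.ncard = r) ∧
      (∀ g ∉ A, {a : G | a ∈ A ∧ g⁻¹ * a ∈ U}.ncard = s) := by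
  classical
  haveI := hA
  haveI : Fintype (G ⧸ A) := Fintype.ofFinite _
  set fib : (G ⧸ A) → Finset G :=
    fun q => Finset.univ.filter (fun g => (QuotientGroup.mk g : G ⧸ A) = q) with hfibdef
  have hfib_mem : ∀ q g, g ∈ fib q ↔ (QuotientGroup.mk g : G ⧸ A) = q := by
    intro q g; simp [hfibdef]
  have hfib_card : ∀ q, (fib q).card = Nat.card ↥A := by
    intro q
    obtain ⟨x, rfl⟩ := QuotientGroup.mk_surjective q
    rw [Nat.card_eq_fintype_card, Fintype.card_subtype]
    apply Finset.card_bij' (fun g _ => x⁻¹ * g) (fun a _ => x * a)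
    · intro g hg
      rw [hfib_mem] at hg
      rw [Finset.mem_filter]
      exact ⟨Finset.mem_univ _, QuotientGroup.eq.1 hg.symm⟩
    · intro a ha
      rw [Finset.mem_filter] at ha
      rw [hfib_mem]
      have he : (QuotientGroup.mk (x * a) : G ⧸ A) = QuotientGroup.mk x * QuotientGroup.mk a := rfl
      rw [he, (QuotientGroup.eq_one_iff a).2 ha.2, mul_one]
    · intro g _; group
    · intro a _; group
  have hAodd : Odd r → ∃ g : G, g ∈ A ∧ g ≠ 1 ∧ g⁻¹ = g := by
    intro hroddn
    have hodd1 : Odd (Nat.card ↥A - 1) := by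
      by_contra h
      have h2d : 2 ∣ Nat.card ↥A - 1 := by
        rcases Nat.not_odd_iff_even.1 h with ⟨k, hk⟩
        exact ⟨k, by omega⟩
      have h2 : Nat.gcd 2 (Nat.card ↥A - 1) = 2 := Nat.gcd_eq_left h2d
      rw [h2] at hgcd
      rcases hgcd with ⟨m, hm⟩
      rcases hroddn with ⟨k, hk⟩
      omega
    have hpos : 0 < Nat.card ↥A := Nat.card_pos
    have heven : 2 ∣ Fintype.card ↥A := by
      rw [← Nat.card_eq_fintype_card]
      rcases hodd1 with ⟨k, hk⟩
      exact ⟨k + 1, by omega⟩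
    obtain ⟨a, ha2⟩ := exists_prime_orderOf_dvd_card 2 heven
    have hog : orderOf (a : G) = 2 :=
      (orderOf_injective A.subtype A.subtype_injective a).trans ha2
    refine ⟨(a : G), a.2, ?_, ?_⟩
    · intro h
      rw [h, orderOf_one] at hog
      exact absurd hog (by norm_num)
    · rw [inv_eq_iff_mul_eq_one, ← pow_two, ← hog, pow_orderOf_eq_one]
  have hall : ∀ q : G ⧸ A, ∃ S : Finset G,
      (∀ g ∈ S, (QuotientGroup.mk g : G ⧸ A) = q) ∧ (1 : G) ∉ S ∧
      (q⁻¹ = q → ∀ g ∈ S, g⁻¹ ∈ S) ∧ S.card = (if q = 1 then r else s) := by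
    intro q
    by_cases hq1 : q = 1
    · subst hq1
      set W := (fib 1).erase 1 with hW
      have hWmem : ∀ g, g ∈ W ↔ g ∈ A ∧ g ≠ 1 := by
        intro g
        rw [hW, Finset.mem_erase, hfib_mem, QuotientGroup.eq_one_iff]
        tauto
      have hWcard : W.card = Nat.card ↥A - 1 := by
        rw [hW, Finset.card_erase_of_mem ((hfib_mem 1 1).2 (by simp)), hfib_card]
      obtain ⟨S, hSW, hScard, hSclosed⟩ := myLemE (fun g : G => g⁻¹) (fun g => inv_inv g) r W
        (fun g hg => by
          rcases (hWmem g).1 hg with ⟨h1', h2'⟩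
          exact (hWmem g⁻¹).2 ⟨A.inv_mem h1', by simp [h2']⟩)
        (by rw [hWcard]; exact hr)
        (fun ho => by
          obtain ⟨g, hgA, hg1, hginv⟩ := hAodd ho
          exact ⟨g, (hWmem g).2 ⟨hgA, hg1⟩, hginv⟩)
      refine ⟨S, ?_, ?_, fun _ => hSclosed, by rw [if_pos rfl]; exact hScard⟩
      · intro g hg
        exact (QuotientGroup.eq_one_iff g).2 ((hWmem g).1 (hSW hg)).1
      · intro h
        exact ((hWmem 1).1 (hSW h)).2 rfl
    · have h1mem : ∀ (S : Finset G), S ⊆ fib q → (1 : G) ∉ S := by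
        intro S hSW h
        apply hq1
        rw [← (hfib_mem q 1).1 (hSW h)]
        simp
      by_cases hqi : q⁻¹ = q
      · obtain ⟨x, hxq⟩ := QuotientGroup.mk_surjective q
        have hxA : x ∉ A := fun h => hq1 (by rw [← hxq]; exact (QuotientGroup.eq_one_iff x).2 h)
        have hx2 : x ^ 2 ∈ A := by
          rw [← QuotientGroup.eq_one_iff]
          have he : (QuotientGroup.mk (x ^ 2) : G ⧸ A) = q * q := by
            rw [pow_two]
            have : (QuotientGroup.mk (x * x) : G ⧸ A)
                = QuotientGroup.mk x * QuotientGroup.mk x := rfl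
            rw [this, hxq]
          rw [he]
          nth_rewrite 2 [← hqi]
          exact mul_inv_cancel q
        obtain ⟨a, haA, haord⟩ := hinvol x hxA hx2
        have hxaq : (QuotientGroup.mk (x * a) : G ⧸ A) = q := by
          have : (QuotientGroup.mk (x * a) : G ⧸ A)
              = QuotientGroup.mk x * QuotientGroup.mk a := rfl
          rw [this, (QuotientGroup.eq_one_iff a).2 haA, mul_one, hxq]
        have hxainv : (x * a)⁻¹ = x * a := by
          rw [inv_eq_iff_mul_eq_one, ← pow_two, ← haord, pow_orderOf_eq_one]
        obtain ⟨S, hSW, hScard, hSclosed⟩ := myLemE (fun g : G => g⁻¹) (fun g => inv_inv g)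
          s (fib q)
          (fun g hg => by
            rw [hfib_mem] at hg ⊢
            have : (QuotientGroup.mk g⁻¹ : G ⧸ A) = (QuotientGroup.mk g : G ⧸ A)⁻¹ := rfl
            rw [this, hg, hqi])
          (by rw [hfib_card]; exact hs)
          (fun _ => ⟨x * a, (hfib_mem q (x * a)).2 hxaq, hxainv⟩)
        exact ⟨S, fun g hg => (hfib_mem q g).1 (hSW hg), h1mem S hSW, fun _ => hSclosed,
          by rw [if_neg hq1]; exact hScard⟩
      · obtain ⟨S, hSW, hScard⟩ :=
          Finset.exists_subset_card_eq (s := fib q) (n := s) (by rw [hfib_card]; exact hs)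
        exact ⟨S, fun g hg => (hfib_mem q g).1 (hSW hg), h1mem S hSW,
          fun h => absurd h hqi, by rw [if_neg hq1]; exact hScard⟩
  choose f hf1 hf2 hf3 hf4 using hall
  set e := Fintype.equivFin (G ⧸ A) with hedef
  have hFall : ∃ F : (G ⧸ A) → Finset G,
      (∀ q, ∀ g ∈ F q, (QuotientGroup.mk g : G ⧸ A) = q) ∧
      (∀ q, (F q).card = if q = 1 then r else s) ∧
      (∀ q, ∀ g ∈ F q, g⁻¹ ∈ F q⁻¹) ∧ (1 : G) ∉ F 1 := by
    refine ⟨fun q => if q⁻¹ = q then f q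
      else if e q ≤ e q⁻¹ then f q else (f q⁻¹).image (fun g => g⁻¹), ?_, ?_, ?_, ?_⟩
    · intro q g hg
      by_cases h1' : q⁻¹ = q
      · simp only [if_pos h1'] at hg
        exact hf1 q g hg
      · by_cases h2' : e q ≤ e q⁻¹
        · simp only [if_neg h1', if_pos h2'] at hg
          exact hf1 q g hg
        · simp only [if_neg h1', if_neg h2'] at hg
          obtain ⟨h', hh', rfl⟩ := Finset.mem_image.1 hg
          have he2 : (QuotientGroup.mk h'⁻¹ : G ⧸ A) = (QuotientGroup.mk h' : G ⧸ A)⁻¹ := rfl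
          rw [he2, hf1 q⁻¹ h' hh', inv_inv]
    · intro q
      by_cases h1' : q⁻¹ = q
      · simp only [if_pos h1']
        exact hf4 q
      · have hq1 : q ≠ 1 := fun h => h1' (by rw [h]; exact inv_one)
        have hqi1 : q⁻¹ ≠ 1 := fun h => hq1 (by rw [← inv_inv q, h, inv_one])
        by_cases h2' : e q ≤ e q⁻¹
        · simp only [if_neg h1', if_pos h2']
          rw [hf4 q, if_neg hq1]
        · simp only [if_neg h1', if_neg h2']
          rw [Finset.card_image_of_injective _ inv_injective, hf4 q⁻¹, if_neg hqi1,
            if_neg hq1]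
    · intro q g hg
      by_cases h1' : q⁻¹ = q
      · rw [h1']
        simp only [if_pos h1'] at hg ⊢
        exact hf3 q h1' g hg
      · have h1'' : (q⁻¹)⁻¹ ≠ q⁻¹ := by
          rw [inv_inv]
          exact fun h => h1' h.symm
        by_cases h2' : e q ≤ e q⁻¹
        · have h3 : ¬(e q⁻¹ ≤ e (q⁻¹)⁻¹) := by
            rw [inv_inv]
            intro h
            exact h1' (e.injective (le_antisymm h2' h)).symm
          simp only [if_neg h1', if_pos h2'] at hg
          simp only [if_neg h1'', if_neg h3]
          rw [inv_inv]
          exact Finset.mem_image_of_mem _ hg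
        · have h3 : e q⁻¹ ≤ e (q⁻¹)⁻¹ := by
            rw [inv_inv]
            exact le_of_not_ge h2'
          simp only [if_neg h1', if_neg h2'] at hg
          simp only [if_neg h1'', if_pos h3]
          obtain ⟨h', hh', rfl⟩ := Finset.mem_image.1 hg
          rw [inv_inv]
          exact hh'
    · have hone : (1 : G ⧸ A)⁻¹ = 1 := inv_one
      simp only [if_pos hone]
      exact hf2 1
  obtain ⟨F, hFmem, hFcard, hFinv, hF1⟩ := hFall
  refine ⟨{g : G | g ∈ F (QuotientGroup.mk g)}, ?_, ?_, ?_, ?_⟩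
  · ext g
    rw [Set.mem_inv]
    constructor
    · intro h
      have h2 := hFinv _ _ h
      rw [inv_inv] at h2
      have he2 : ((QuotientGroup.mk g⁻¹ : G ⧸ A))⁻¹ = QuotientGroup.mk g := by
        have : (QuotientGroup.mk g⁻¹ : G ⧸ A) = (QuotientGroup.mk g : G ⧸ A)⁻¹ := rfl
        rw [this, inv_inv]
      rwa [he2] at h2
    · intro h
      exact hFinv _ _ h
  · intro h
    have he2 : (QuotientGroup.mk (1 : G) : G ⧸ A) = 1 := by simp
    rw [Set.mem_setOf_eq, he2] at h
    exact hF1 h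
  all_goals
    have hcnt : ∀ g : G, {a : G | a ∈ A ∧ g⁻¹ * a ∈ {g : G | g ∈ F (QuotientGroup.mk g)}}.ncard
        = (F (QuotientGroup.mk g : G ⧸ A)⁻¹).card := by
      intro g
      have hset : {a : G | a ∈ A ∧ g⁻¹ * a ∈ {g : G | g ∈ F (QuotientGroup.mk g)}}
          = (fun u => g * u) '' ↑(F (QuotientGroup.mk g : G ⧸ A)⁻¹) := by
        ext b
        simp only [Set.mem_setOf_eq, Set.mem_image, Finset.mem_coe]
        constructor
        · rintro ⟨hbA, hbU⟩
          refine ⟨g⁻¹ * b, ?_, by group⟩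
          have he2 : (QuotientGroup.mk (g⁻¹ * b) : G ⧸ A) = (QuotientGroup.mk g : G ⧸ A)⁻¹ := by
            have h1 : (QuotientGroup.mk (g⁻¹ * b) : G ⧸ A)
                = (QuotientGroup.mk g : G ⧸ A)⁻¹ * QuotientGroup.mk b := rfl
            rw [h1, (QuotientGroup.eq_one_iff b).2 hbA, mul_one]
          rwa [he2] at hbU
        · rintro ⟨u, huF, rfl⟩
          have hmku : (QuotientGroup.mk u : G ⧸ A) = (QuotientGroup.mk g : G ⧸ A)⁻¹ :=
            hFmem _ u huF
          constructor
          · rw [← QuotientGroup.eq_one_iff]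
            have he2 : (QuotientGroup.mk (g * u) : G ⧸ A)
                = QuotientGroup.mk g * QuotientGroup.mk u := rfl
            rw [he2, hmku, mul_inv_cancel]
          · have he2 : g⁻¹ * (g * u) = u := by group
            rw [he2, hmku]
            exact huF
      rw [hset, Set.ncard_image_of_injective _ (mul_right_injective g), Set.ncard_coe_finset]
  · intro g hg
    rw [hcnt g, hFcard]
    have : (QuotientGroup.mk g : G ⧸ A)⁻¹ = 1 := by
      rw [(QuotientGroup.eq_one_iff g).2 hg, inv_one]
    rw [if_pos this]
  · intro g hg
    rw [hcnt g, hFcard]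
    have : (QuotientGroup.mk g : G ⧸ A)⁻¹ ≠ 1 := by
      intro h
      exact hg ((QuotientGroup.eq_one_iff g).1 (by rwa [inv_eq_one] at h))
    rw [if_neg this]

/-- **Corollary B1(b).** Let `A ⊴ G`, `0 ≤ r ≤ |A| − 1`, `0 ≤ s ≤ |A|`, with
`gcd(2, |A| − 1)` dividing `r`. If `s` is odd, then `A` is an `(r,s)`-regular set of `G`
iff `xA` contains an involution for every `x ∈ G∖A` with `x² ∈ A`. -/
theorem corollaryB1b {G : Type*} [Group G] [Fintype G] (A : Subgroup G) (hA : A.Normal)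
    (r s : ℕ) (hr : r ≤ Nat.card ↥A - 1) (hs : s ≤ Nat.card ↥A)
    (hgcd : Nat.gcd 2 (Nat.card ↥A - 1) ∣ r) (hsodd : Odd s) :
    IsRegularSetOfGroup A r s ↔
      ∀ x : G, x ∉ A → x ^ 2 ∈ A → ∃ a ∈ A, orderOf (x * a) = 2 := by
  rw [myReduce]
  constructor
  · rintro ⟨U, hU, h1, _, hc2⟩ x hx hx2
    exact myForward A hA s hsodd U hU h1 hc2 x hx hx2
  · intro h
    exact myConstruct A hA r s hr hs hgcd hsodd h
end

section
/- Let G be a finite group, A ⊴ G a normal subgroup, and let r, s be integers with 0 ≤ r ≤ |A| − 1 and 0 ≤ s ≤ |A|, such that gcd(2, |A| − 1) divides r. If s is odd, then A is an (r,s)-regular set of G if and only if A is a perfect code of G. -/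
open scoped Pointwise

/-
Inversion maps `U ∩ gA` onto `U ∩ g⁻¹A`. So for a coset `gA` of order at most two in `G/A`
the set `U ∩ gA` is inverse-closed, and if it has odd size `s`, inversion has a fixed point on
it: `gA` contains an element `x` with `x² = 1`. Conversely, if every coset of order at most two
contains such an element, an inverse-closed `U` meeting `A` in `r` non-identity elements and
every other coset in `s` elements can be chosen coset by coset, choosing the part of `U` in
`g⁻¹A` as the inverse of the part in `gA`; inside `A`, the condition `gcd(2, |A| - 1) ∣ r` makes
an inverse-closed choice possible. The condition on cosets does not depend on `(r, s)`, so for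
odd `s`, `A` is `(r, s)`-regular iff it is `(0, 1)`-regular.
-/

namespace Set

theorem sdiff_inv {α : Type*} [Inv α] (s t : Set α) : (s \ t)⁻¹ = s⁻¹ \ t⁻¹ :=
  preimage_sdiff _ _ _

variable {α : Type*} [InvolutiveInv α]

theorem exists_inv_eq_self_of_odd_ncard {T : Set α} (hT : T⁻¹ = T) (hodd : Odd T.ncard) :
    ∃ x ∈ T, x⁻¹ = x := by
  classical
  by_contra! hfree
  have := (finite_of_ncard_ne_zero hodd.pos.ne').fintype
  let σ : Equiv.Perm T := (Equiv.inv α).subtypePerm fun x => by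
    rw [Equiv.inv_apply, ← mem_inv, hT]
  have hσ : σ ^ 2 = 1 := by
    ext x
    simp [σ, sq]
  have hsupp : σ.support = Finset.univ := by
    ext x
    simpa [σ, Subtype.ext_iff] using hfree x x.2
  have h2 := Equiv.Perm.two_dvd_card_support hσ
  rw [hsupp, Finset.card_univ, ← Nat.card_eq_fintype_card, Nat.card_coe_set_eq] at h2
  exact Nat.not_even_iff_odd.2 hodd (even_iff_two_dvd.2 h2)

theorem exists_subset_inv_eq_ncard_eq_two {T : Set α} (hT : T⁻¹ = T) (h2 : 2 ≤ T.ncard) :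
    ∃ P ⊆ T, P⁻¹ = P ∧ P.ncard = 2 := by
  have hpair : ∀ z ∈ T, z⁻¹ ≠ z → ∃ P ⊆ T, P⁻¹ = P ∧ P.ncard = 2 := fun z hz hne =>
    ⟨{z, z⁻¹}, pair_subset hz (by rwa [← mem_inv, hT]),
      by rw [inv_insert, inv_singleton, inv_inv, pair_comm], ncard_pair hne.symm⟩
  obtain ⟨x, y, hx, hy, hxy⟩ :=
    (one_lt_ncard_iff (finite_of_ncard_pos (by omega))).1 (by omega : 1 < T.ncard)
  by_cases hxfix : x⁻¹ = x
  · by_cases hyfix : y⁻¹ = y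
    · refine ⟨{x, y}, pair_subset hx hy, ?_, ncard_pair hxy⟩
      rw [inv_insert, inv_singleton, hxfix, hyfix]
    · exact hpair y hy hyfix
  · exact hpair x hx hxfix

theorem exists_subset_inv_eq_ncard_eq_two_mul {T : Set α} (hT : T⁻¹ = T) {k : ℕ}
    (hk : 2 * k ≤ T.ncard) : ∃ S ⊆ T, S⁻¹ = S ∧ S.ncard = 2 * k := by
  induction k generalizing T with
  | zero => exact ⟨∅, empty_subset T, inv_empty, ncard_empty α⟩
  | succ k ih =>
    obtain ⟨P, hPT, hP, hP2⟩ := exists_subset_inv_eq_ncard_eq_two hT (by omega)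
    have hPfin : P.Finite := finite_of_ncard_pos (by omega)
    have hrest : (T \ P).ncard = T.ncard - 2 := by rw [ncard_sdiff hPT hPfin, hP2]
    obtain ⟨S, hST, hS, hSk⟩ := ih (T := T \ P) (by rw [sdiff_inv, hT, hP]) (by omega)
    have hSfin : S.Finite := (finite_of_ncard_pos (by omega)).subset (hST.trans sdiff_subset)
    refine ⟨P ∪ S, union_subset hPT (hST.trans sdiff_subset), by rw [union_inv, hP, hS], ?_⟩
    rw [ncard_union_eq (disjoint_of_subset_right hST disjoint_sdiff_right) hPfin hSfin, hP2, hSk,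
      mul_add_one, add_comm]

theorem exists_subset_inv_eq_ncard_eq {T : Set α} (hT : T⁻¹ = T) {m : ℕ} (hm : m ≤ T.ncard)
    (hpar : Even m ∨ ∃ x ∈ T, x⁻¹ = x) : ∃ S ⊆ T, S⁻¹ = S ∧ S.ncard = m := by
  rcases m.even_or_odd with ⟨k, rfl⟩ | hodd
  · rw [← two_mul] at hm ⊢
    exact exists_subset_inv_eq_ncard_eq_two_mul hT hm
  obtain ⟨x, hx, hxfix⟩ := hpar.resolve_left (Nat.not_even_iff_odd.2 hodd)
  obtain ⟨k, rfl⟩ := hodd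
  have hrest : (T \ {x}).ncard = T.ncard - 1 := ncard_sdiff_singleton_of_mem hx
  obtain ⟨S, hST, hS, hSk⟩ := exists_subset_inv_eq_ncard_eq_two_mul (T := T \ {x}) (k := k)
    (by rw [sdiff_inv, hT, inv_singleton, hxfix]) (by omega)
  have hxS : x ∉ S := fun h => (hST h).2 rfl
  refine ⟨insert x S, insert_subset hx (hST.trans sdiff_subset), ?_, ?_⟩
  · rw [inv_insert, hxfix, hS]
  · have hSfin : S.Finite := (finite_of_ncard_pos (by omega)).subset (hST.trans sdiff_subset)
    rw [ncard_insert_of_notMem hxS hSfin, hSk]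

end Set

theorem exists_map_inv_eq_inv_map {Q X : Type*} [InvolutiveInv Q] [InvolutiveInv X] (f : Q → X)
    (hf : ∀ q, q⁻¹ = q → (f q)⁻¹ = f q) :
    ∃ F : Q → X, (∀ q, F q⁻¹ = (F q)⁻¹) ∧ ∀ q, F q = f q ∨ F q = (f q⁻¹)⁻¹ := by
  classical
  let := IsWellOrder.linearOrder (WellOrderingRel (α := Q))
  refine ⟨fun q => if q ≤ q⁻¹ then f q else (f q⁻¹)⁻¹, fun q => ?_, fun q => ?_⟩
  · rcases lt_trichotomy q q⁻¹ with h | h | h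
    · simp [h.le, not_le.2 h]
    · simp only [← h, le_refl, if_true]
      exact (hf q h.symm).symm
    · simp [h.le, not_le.2 h]
  · dsimp only
    split_ifs
    exacts [Or.inl rfl, Or.inr rfl]

section

variable {G : Type*} [Group G]

theorem QuotientGroup.mk_bot_injective :
    Function.Injective (QuotientGroup.mk : G → G ⧸ (⊥ : Subgroup G)) :=
  QuotientGroup.quotientBot.symm.injective

theorem isCosetGraphConnectionSet_bot_iff {U : Set G} :
    IsCosetGraphConnectionSet ⊥ U ↔ U⁻¹ = U ∧ (1 : G) ∉ U := by
  simp [IsCosetGraphConnectionSet, Set.eq_empty_iff_forall_notMem]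

theorem cosetGraph_bot_adj {U : Set G} (hU : U⁻¹ = U) (h1 : (1 : G) ∉ U) (x y : G) :
    (cosetGraph ⊥ U).Adj (x : G ⧸ (⊥ : Subgroup G)) y ↔ x⁻¹ * y ∈ U := by
  have hmk := QuotientGroup.mk_bot_injective (G := G)
  have hsymm : y⁻¹ * x ∈ U ↔ x⁻¹ * y ∈ U := by
    rw [← Set.inv_mem_inv, hU, mul_inv_rev, inv_inv]
  simp only [cosetGraph, SimpleGraph.fromRel_adj, ne_eq, hmk.eq_iff, exists_and_left,
    exists_eq_left, hsymm, or_self, and_iff_right_iff_imp]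
  rintro h rfl
  exact h1 (by simpa using h)

theorem cosetGraph_bot_adj_inter_eq_image {U : Set G} (hU : U⁻¹ = U) (h1 : (1 : G) ∉ U)
    (A : Subgroup G) (x : G) :
    {w | w ∈ {C : G ⧸ (⊥ : Subgroup G) | ∃ a ∈ A, (a : G ⧸ (⊥ : Subgroup G)) = C} ∧
      (cosetGraph ⊥ U).Adj (x : G ⧸ (⊥ : Subgroup G)) w} =
      QuotientGroup.mk '' ((A : Set G) ∩ x • U) := by
  ext w
  obtain ⟨y, rfl⟩ := QuotientGroup.mk_surjective w
  simp [QuotientGroup.mk_bot_injective.eq_iff, cosetGraph_bot_adj hU h1,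
    Set.mem_smul_set_iff_inv_smul_mem]

theorem isRegularSetOfGroup_iff (A : Subgroup G) (r s : ℕ) :
    IsRegularSetOfGroup A r s ↔ ∃ U : Set G, U⁻¹ = U ∧ (1 : G) ∉ U ∧
      (∀ x ∈ A, ((A : Set G) ∩ x • U).ncard = r) ∧ ∀ x ∉ A, ((A : Set G) ∩ x • U).ncard = s := by
  have hC (y : G) :
      (y : G ⧸ (⊥ : Subgroup G)) ∈ {C | ∃ a ∈ A, (a : G ⧸ (⊥ : Subgroup G)) = C} ↔ y ∈ A := by
    simp [QuotientGroup.mk_bot_injective.eq_iff]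
  simp only [IsRegularSetOfGroup, IsRegularSetOfPair, isCosetGraphConnectionSet_bot_iff,
    IsRegularVertexSet, QuotientGroup.mk_surjective.forall, hC, and_assoc]
  refine exists_congr fun U => and_congr_right fun hU => and_congr_right fun h1 => ?_
  simp only [cosetGraph_bot_adj_inter_eq_image hU h1,
    Set.ncard_image_of_injective _ QuotientGroup.mk_bot_injective]

namespace QuotientGroup

theorem preimage_mk_singleton_inv (A : Subgroup G) [A.Normal] (q : G ⧸ A) :
    ((mk : G → G ⧸ A) ⁻¹' {q})⁻¹ = mk ⁻¹' {q⁻¹} := by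
  ext x
  simp [inv_eq_iff_eq_inv]

theorem preimage_mk_singleton_one (A : Subgroup G) [A.Normal] :
    (mk : G → G ⧸ A) ⁻¹' {1} = A := by
  ext x
  simp [eq_one_iff]

theorem ncard_preimage_mk_singleton (A : Subgroup G) (q : G ⧸ A) :
    ((mk : G → G ⧸ A) ⁻¹' {q}).ncard = Nat.card A := by
  rw [← Nat.card_coe_set_eq, card_preimage_mk, Nat.card_coe_set_eq, Set.ncard_singleton, mul_one]

end QuotientGroup

theorem Subgroup.ncard_inter_smul_eq (A : Subgroup G) (U : Set G) (x : G) :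
    ((A : Set G) ∩ x • U).ncard = (U ∩ QuotientGroup.mk ⁻¹' {((x⁻¹ : G) : G ⧸ A)}).ncard := by
  rw [← Set.ncard_smul_set x⁻¹, Set.smul_set_inter, inv_smul_smul, Set.inter_comm]
  congr 2
  exact (QuotientGroup.eq_class_eq_leftCoset A x⁻¹).symm

theorem isRegularSetOfGroup_iff_of_normal (A : Subgroup G) [A.Normal] (r s : ℕ) :
    IsRegularSetOfGroup A r s ↔ ∃ U : Set G, U⁻¹ = U ∧ (1 : G) ∉ U ∧
      (U ∩ QuotientGroup.mk ⁻¹' {(1 : G ⧸ A)}).ncard = r ∧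
      ∀ q : G ⧸ A, q ≠ 1 → (U ∩ QuotientGroup.mk ⁻¹' {q}).ncard = s := by
  simp only [isRegularSetOfGroup_iff, Subgroup.ncard_inter_smul_eq]
  refine exists_congr fun U => and_congr_right fun _ => and_congr_right fun _ => and_congr ?_ ?_
  · refine ⟨fun h => by simpa using h 1 A.one_mem, fun h x hx => ?_⟩
    rwa [(QuotientGroup.eq_one_iff _).2 (A.inv_mem hx)]
  · refine ⟨fun h q hq => ?_, fun h x hx => h _ ?_⟩
    · obtain ⟨x, rfl⟩ := QuotientGroup.mk_surjective q
      simpa using h x⁻¹ (by simpa [QuotientGroup.eq_one_iff] using hq)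
    · rwa [ne_eq, QuotientGroup.eq_one_iff, inv_mem_iff]

theorem Subgroup.coe_sdiff_one_inv (A : Subgroup G) :
    ((A : Set G) \ {1})⁻¹ = (A : Set G) \ {1} := by
  rw [Set.sdiff_inv, inv_coe_set, Set.inv_singleton, inv_one]

theorem Subgroup.ncard_coe_sdiff_one (A : Subgroup G) :
    ((A : Set G) \ {1}).ncard = Nat.card A - 1 := by
  rw [Set.ncard_sdiff_singleton_of_mem A.one_mem, ← Nat.card_coe_set_eq, SetLike.coe_sort_coe]

theorem even_or_exists_inv_eq_self_of_gcd_dvd (A : Subgroup G) {r : ℕ}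
    (hr : Nat.gcd 2 (Nat.card A - 1) ∣ r) : Even r ∨ ∃ x ∈ (A : Set G) \ {1}, x⁻¹ = x := by
  by_cases h2 : 2 ∣ Nat.card A - 1
  · exact Or.inl (even_iff_two_dvd.2 (Nat.gcd_eq_left h2 ▸ hr))
  refine Or.inr (Set.exists_inv_eq_self_of_odd_ncard A.coe_sdiff_one_inv ?_)
  rwa [A.ncard_coe_sdiff_one, Nat.odd_iff, ← Nat.two_dvd_ne_zero]

theorem exists_inv_eq_self_of_ncard_inter_preimage_mk_odd (A : Subgroup G) [A.Normal]
    {U : Set G} (hU : U⁻¹ = U) {s : ℕ}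
    (hs : ∀ q : G ⧸ A, q ≠ 1 → (U ∩ QuotientGroup.mk ⁻¹' {q}).ncard = s) (hsodd : Odd s)
    (q : G ⧸ A) (hq : q⁻¹ = q) : ∃ x : G, x⁻¹ = x ∧ (x : G ⧸ A) = q := by
  by_cases hq1 : q = 1
  · exact ⟨1, inv_one, hq1.symm⟩
  have hT : (U ∩ QuotientGroup.mk ⁻¹' {q})⁻¹ = U ∩ QuotientGroup.mk ⁻¹' {q} := by
    rw [Set.inter_inv, hU, QuotientGroup.preimage_mk_singleton_inv, hq]
  obtain ⟨x, ⟨-, hx⟩, hxx⟩ := Set.exists_inv_eq_self_of_odd_ncard hT (hs q hq1 ▸ hsodd)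
  exact ⟨x, hxx, hx⟩

open Classical in
theorem exists_subset_preimage_mk (A : Subgroup G) [A.Normal] {r s : ℕ}
    (hr : r ≤ Nat.card A - 1) (hs : s ≤ Nat.card A)
    (hr_par : Even r ∨ ∃ x ∈ (A : Set G) \ {1}, x⁻¹ = x)
    (hlift : ∀ q : G ⧸ A, q⁻¹ = q → ∃ x : G, x⁻¹ = x ∧ (x : G ⧸ A) = q) (q : G ⧸ A) :
    ∃ S ⊆ QuotientGroup.mk ⁻¹' {q}, (1 : G) ∉ S ∧ (q⁻¹ = q → S⁻¹ = S) ∧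
      S.ncard = if q = 1 then r else s := by
  by_cases hq1 : q = 1
  · subst hq1
    obtain ⟨S, hST, hS, hSr⟩ :=
      Set.exists_subset_inv_eq_ncard_eq A.coe_sdiff_one_inv (A.ncard_coe_sdiff_one ▸ hr) hr_par
    refine ⟨S, ?_, fun h => (hST h).2 rfl, fun _ => hS, by rw [if_pos rfl, hSr]⟩
    rw [QuotientGroup.preimage_mk_singleton_one]
    exact hST.trans Set.sdiff_subset
  have hm : s ≤ (QuotientGroup.mk ⁻¹' {q} : Set G).ncard := by
    rwa [QuotientGroup.ncard_preimage_mk_singleton]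
  have h1 : (1 : G) ∉ (QuotientGroup.mk ⁻¹' {q} : Set G) := fun h => hq1 (h.symm.trans rfl)
  rw [if_neg hq1]
  by_cases hq : q⁻¹ = q
  · obtain ⟨x, hxx, hx⟩ := hlift q hq
    obtain ⟨S, hST, hS, hSs⟩ := Set.exists_subset_inv_eq_ncard_eq
      (by rw [QuotientGroup.preimage_mk_singleton_inv, hq]) hm (Or.inr ⟨x, hx, hxx⟩)
    exact ⟨S, hST, fun h => h1 (hST h), fun _ => hS, hSs⟩
  · obtain ⟨S, hST, hSs⟩ := Set.exists_subset_card_eq hm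
    exact ⟨S, hST, fun h => h1 (hST h), fun h => absurd h hq, hSs⟩

theorem exists_ncard_inter_preimage_mk (A : Subgroup G) [A.Normal] {r s : ℕ}
    (hr : r ≤ Nat.card A - 1) (hs : s ≤ Nat.card A)
    (hr_par : Even r ∨ ∃ x ∈ (A : Set G) \ {1}, x⁻¹ = x)
    (hlift : ∀ q : G ⧸ A, q⁻¹ = q → ∃ x : G, x⁻¹ = x ∧ (x : G ⧸ A) = q) :
    ∃ U : Set G, U⁻¹ = U ∧ (1 : G) ∉ U ∧
      (U ∩ QuotientGroup.mk ⁻¹' {(1 : G ⧸ A)}).ncard = r ∧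
      ∀ q : G ⧸ A, q ≠ 1 → (U ∩ QuotientGroup.mk ⁻¹' {q}).ncard = s := by
  classical
  choose S hST hS1 hSinv hScard using exists_subset_preimage_mk A hr hs hr_par hlift
  obtain ⟨F, hFinv, hFS⟩ := exists_map_inv_eq_inv_map S hSinv
  have hF : ∀ q, F q ⊆ QuotientGroup.mk ⁻¹' {q} ∧ (1 : G) ∉ F q ∧
      (F q).ncard = if q = 1 then r else s := by
    intro q
    rcases hFS q with h | h <;> rw [h]
    · exact ⟨hST q, hS1 q, hScard q⟩
    · refine ⟨?_, by simpa using hS1 q⁻¹, by simp [hScard]⟩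
      simpa [QuotientGroup.preimage_mk_singleton_inv] using Set.inv_subset_inv.2 (hST q⁻¹)
  -- `U` is the union of the sets `F q`, each contained in the coset `q`.
  have hU : ∀ q, {x : G | x ∈ F x} ∩ QuotientGroup.mk ⁻¹' {q} = F q := by
    intro q
    ext x
    refine ⟨fun ⟨hx, hxq⟩ => hxq ▸ hx, fun hx => ⟨?_, (hF q).1 hx⟩⟩
    rwa [Set.mem_ofPred_eq, (hF q).1 hx]
  refine ⟨{x : G | x ∈ F x}, ?_, fun h => (hF 1).2.1 h, ?_, fun q hq => ?_⟩
  · ext x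
    simp [QuotientGroup.mk_inv, hFinv]
  · rw [hU, (hF 1).2.2, if_pos rfl]
  · rw [hU, (hF q).2.2, if_neg hq]

end

theorem corollaryB2_general {G : Type*} [Group G] (A : Subgroup G) (hA : A.Normal)
    (r s : ℕ) (hr : r ≤ Nat.card ↥A - 1) (hs : s ≤ Nat.card ↥A)
    (hgcd : Nat.gcd 2 (Nat.card ↥A - 1) ∣ r) (hsodd : Odd s) :
    IsRegularSetOfGroup A r s ↔ IsPerfectCodeOfGroup A := by
  have hA1 : 1 ≤ Nat.card A := hsodd.pos.trans_le hs
  rw [IsPerfectCodeOfGroup, isRegularSetOfGroup_iff_of_normal, isRegularSetOfGroup_iff_of_normal]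
  constructor
  · rintro ⟨U, hU, -, -, hUs⟩
    exact exists_ncard_inter_preimage_mk A (Nat.zero_le _) hA1 (Or.inl .zero)
      (exists_inv_eq_self_of_ncard_inter_preimage_mk_odd A hU hUs hsodd)
  · rintro ⟨U, hU, -, -, hU1⟩
    exact exists_ncard_inter_preimage_mk A hr hs (even_or_exists_inv_eq_self_of_gcd_dvd A hgcd)
      (exists_inv_eq_self_of_ncard_inter_preimage_mk_odd A hU hU1 odd_one)

/-- **Corollary B2.** Let `A ⊴ G`, `0 ≤ r ≤ |A| − 1`, `0 ≤ s ≤ |A|`, with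
`gcd(2, |A| − 1)` dividing `r`. If `s` is odd, then `A` is an `(r,s)`-regular set of `G`
iff `A` is a perfect code of `G`. -/
theorem corollaryB2 {G : Type*} [Group G] [Fintype G] (A : Subgroup G) (hA : A.Normal)
    (r s : ℕ) (hr : r ≤ Nat.card ↥A - 1) (hs : s ≤ Nat.card ↥A)
    (hgcd : Nat.gcd 2 (Nat.card ↥A - 1) ∣ r) (hsodd : Odd s) :
    IsRegularSetOfGroup A r s ↔ IsPerfectCodeOfGroup A :=
  corollaryB2_general A hA r s hr hs hgcd hsodd
end

section
/- Let G be a finite group with subgroups H ≤ A ⊴ G (A normal in G), and let r, s be integers with 0 ≤ r ≤ |N_A(H)/H| − 1, gcd(2, |N_A(H)/H| − 1) dividing r, and 0 ≤ s ≤ |N_A(H)/H|. If G = N_G(H)A and N_A(H)/H is an (r,s)-regular set of the group N_G(H)/H, then A is an (r,s)-regular set of the pair (G,H). -/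
open scoped Pointwise

/-- The subgroup `N_A(H)/H` of the quotient group `N_G(H)/H`, where
`N_A(H) = N_G(H) ∩ A`. -/
def NAHmodH {G : Type*} [Group G] (H A : Subgroup G) :
    Subgroup ((Subgroup.normalizer (H : Set G)) ⧸ H.subgroupOf (Subgroup.normalizer (H : Set G))) :=
  Subgroup.map (QuotientGroup.mk' (H.subgroupOf (Subgroup.normalizer (H : Set G)))) (A.subgroupOf (Subgroup.normalizer (H : Set G)))

/-!
Let `N = N_G(H)` and `Q = N/H`. A connection set `U'` of a Cayley graph of `Q` lifts to the
connection set `U = {u ∈ N | uH ∈ U'}` of a coset graph of `(G,H)`. Since `G = NA`, every vertex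
is `naH` with `n ∈ N`, `a ∈ A`; normality of `A` gives `nau ∈ A ↔ nu ∈ A`, so the neighbours of
`naH` inside `A/H` correspond bijectively (via `q ↦ na·q`) to the neighbours of `nH` inside
`N_A(H)/H` in the Cayley graph `Cay(Q,U')`, and `naH ∈ A/H ↔ nH ∈ N_A(H)/H`.
-/

theorem IsRegularVertexSet.of_forall_exists {V W : Type*} {Γ : SimpleGraph V}
    {Δ : SimpleGraph W} {C : Set V} {C' : Set W} {r s : ℕ} (h : IsRegularVertexSet Δ C' r s)
    (hcorr : ∀ v, ∃ w, (v ∈ C ↔ w ∈ C') ∧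
      {x | x ∈ C ∧ Γ.Adj v x}.ncard = {y | y ∈ C' ∧ Δ.Adj w y}.ncard) :
    IsRegularVertexSet Γ C r s := by
  constructor <;> intro v hv <;> obtain ⟨w, hmem, hcard⟩ := hcorr v <;> rw [hcard]
  · exact h.1 w (hmem.mp hv)
  · exact h.2 w (hmem.not.mp hv)

section CosetGraph

variable {G : Type*} [Group G] {H A : Subgroup G} {U : Set G}

theorem IsCosetGraphConnectionSet.inv_mul_mem_of_mk_eq (hU : IsCosetGraphConnectionSet H U)
    {a b g₁ g₂ : G} (ha : (a : G ⧸ H) = g₁) (hb : (b : G ⧸ H) = g₂) (hab : a⁻¹ * b ∈ U) :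
    g₁⁻¹ * g₂ ∈ U := by
  have h₁ : a⁻¹ * g₁ ∈ H := QuotientGroup.eq.mp ha
  have h₂ : b⁻¹ * g₂ ∈ H := QuotientGroup.eq.mp hb
  rw [← hU.2.2]
  convert Set.mul_mem_mul (Set.mul_mem_mul (inv_mem h₁) hab) h₂ using 1
  group

theorem cosetGraph_adj_mk (hU : IsCosetGraphConnectionSet H U) (g₁ g₂ : G) :
    (cosetGraph H U).Adj (g₁ : G ⧸ H) g₂ ↔ g₁⁻¹ * g₂ ∈ U := by
  refine ⟨?_, fun h => ⟨fun heq => ?_, Or.inl ⟨g₁, g₂, rfl, rfl, h⟩⟩⟩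
  · rintro ⟨-, ⟨a, b, ha, hb, hab⟩ | ⟨a, b, ha, hb, hab⟩⟩
    · exact hU.inv_mul_mem_of_mk_eq ha hb hab
    · have h := Set.inv_mem_inv.mpr (hU.inv_mul_mem_of_mk_eq ha hb hab)
      rwa [hU.1, mul_inv_rev, inv_inv] at h
  · exact hU.2.1.subset ⟨QuotientGroup.eq.mp heq, h⟩

theorem mk_mem_cosets_iff (hHA : H ≤ A) (g : G) :
    (g : G ⧸ H) ∈ {C : G ⧸ H | ∃ a ∈ A, (a : G ⧸ H) = C} ↔ g ∈ A := by
  refine ⟨?_, fun hg => ⟨g, hg, rfl⟩⟩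
  rintro ⟨a, ha, hag⟩
  simpa using mul_mem ha (hHA (QuotientGroup.eq.mp hag))

theorem cosetGraph_neighbours_in_cosets (hU : IsCosetGraphConnectionSet H U) (g : G) :
    {w | w ∈ {C : G ⧸ H | ∃ a ∈ A, (a : G ⧸ H) = C} ∧ (cosetGraph H U).Adj (g : G ⧸ H) w} =
      (fun u => ((g * u : G) : G ⧸ H)) '' {u | u ∈ U ∧ g * u ∈ A} := by
  ext w
  constructor
  · rintro ⟨⟨x, hx, rfl⟩, hadj⟩
    exact ⟨g⁻¹ * x, ⟨(cosetGraph_adj_mk hU g x).mp hadj, by simpa using hx⟩, by simp⟩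
  · rintro ⟨u, ⟨hu, hgu⟩, rfl⟩
    exact ⟨⟨g * u, hgu, rfl⟩, (cosetGraph_adj_mk hU g _).mpr (by simpa using hu)⟩

theorem ncard_cayleyGraph_neighbours_in_subgroup {Q : Type*} [Group Q] {U : Set Q}
    (hU : IsCosetGraphConnectionSet ⊥ U) (B : Subgroup Q) (q : Q) :
    {x | x ∈ {C : Q ⧸ (⊥ : Subgroup Q) | ∃ b ∈ B, (b : Q ⧸ (⊥ : Subgroup Q)) = C} ∧
        (cosetGraph ⊥ U).Adj (q : Q ⧸ (⊥ : Subgroup Q)) x}.ncard =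
      {u | u ∈ U ∧ q * u ∈ B}.ncard := by
  have hmk : Function.Injective (QuotientGroup.mk : Q → Q ⧸ (⊥ : Subgroup Q)) := fun x y h => by
    simpa [inv_mul_eq_one] using QuotientGroup.eq.mp h
  rw [cosetGraph_neighbours_in_cosets hU]
  exact Set.ncard_image_of_injective _ (hmk.comp (mul_right_injective q))

end CosetGraph

section Normalizer

variable {G : Type*} [Group G] (H : Subgroup G)

abbrev NormalizerQuotient : Type _ :=
  Subgroup.normalizer (H : Set G) ⧸ H.subgroupOf (Subgroup.normalizer (H : Set G))

def NormalizerQuotient.toQuotient : NormalizerQuotient H → G ⧸ H :=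
  Quotient.map' Subtype.val fun _ _ h =>
    QuotientGroup.leftRel_apply.mpr (Subgroup.mem_subgroupOf.mp (QuotientGroup.leftRel_apply.mp h))

theorem NormalizerQuotient.toQuotient_injective :
    Function.Injective (NormalizerQuotient.toQuotient H) := by
  rintro ⟨m⟩ ⟨m'⟩ h
  exact QuotientGroup.eq.mpr (Subgroup.mem_subgroupOf.mpr (QuotientGroup.eq.mp h))

def normalizerLift (D : Set (NormalizerQuotient H)) : Set G :=
  Subtype.val '' ((QuotientGroup.mk : _ → NormalizerQuotient H) ⁻¹' D)

variable {H}

theorem isCosetGraphConnectionSet_normalizerLift {D : Set (NormalizerQuotient H)}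
    (hD : IsCosetGraphConnectionSet ⊥ D) : IsCosetGraphConnectionSet H (normalizerLift H D) := by
  obtain ⟨hinv, hdisj, -⟩ := hD
  have hmk_of_mem {m : Subgroup.normalizer (H : Set G)} (hm : (m : G) ∈ H) :
      (m : NormalizerQuotient H) = 1 :=
    (QuotientGroup.eq_one_iff _).mpr (Subgroup.mem_subgroupOf.mpr hm)
  have hinv_mem : ∀ x ∈ normalizerLift H D, x⁻¹ ∈ normalizerLift H D := by
    rintro _ ⟨m, hm, rfl⟩
    refine ⟨m⁻¹, ?_, rfl⟩
    rw [Set.mem_preimage, QuotientGroup.mk_inv, ← Set.mem_inv, hinv]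
    exact hm
  refine ⟨?_, ?_, ?_⟩
  · exact Set.Subset.antisymm (fun x hx => by simpa using hinv_mem _ hx) hinv_mem
  · refine Set.eq_empty_iff_forall_notMem.mpr ?_
    rintro _ ⟨hxH, m, hm, rfl⟩
    rw [Set.mem_preimage, hmk_of_mem hxH] at hm
    exact hdisj.subset ⟨(⊥ : Subgroup (NormalizerQuotient H)).one_mem, hm⟩
  · refine Set.Subset.antisymm ?_ fun x hx =>
      ⟨x, ⟨1, H.one_mem, x, hx, one_mul x⟩, 1, H.one_mem, mul_one x⟩
    rintro _ ⟨_, ⟨h₁, hh₁, _, ⟨m, hm, rfl⟩, rfl⟩, h₂, hh₂, rfl⟩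
    refine ⟨⟨h₁, Subgroup.le_normalizer hh₁⟩ * m * ⟨h₂, Subgroup.le_normalizer hh₂⟩, ?_, rfl⟩
    rwa [Set.mem_preimage, QuotientGroup.mk_mul, QuotientGroup.mk_mul,
      hmk_of_mem (m := ⟨h₁, _⟩) hh₁, hmk_of_mem (m := ⟨h₂, _⟩) hh₂, one_mul, mul_one]

theorem ncard_image_mk_mul_normalizerLift (g : G) (D : Set (NormalizerQuotient H)) :
    ((fun u => ((g * u : G) : G ⧸ H)) '' normalizerLift H D).ncard = D.ncard := by
  have himage : (fun u => ((g * u : G) : G ⧸ H)) '' normalizerLift H D =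
      (fun q => g • NormalizerQuotient.toQuotient H q) '' D := by
    rw [normalizerLift, Set.image_image]
    conv_rhs => rw [← Set.image_preimage_eq D QuotientGroup.mk_surjective, Set.image_image]
    rfl
  rw [himage]
  exact Set.ncard_image_of_injective D
    ((MulAction.injective g).comp (NormalizerQuotient.toQuotient_injective H))

end Normalizer

section RegularSet

variable {G : Type*} [Group G] {H A : Subgroup G}

theorem mk_mem_NAHmodH_iff (hHA : H ≤ A) (m : Subgroup.normalizer (H : Set G)) :
    (m : NormalizerQuotient H) ∈ NAHmodH H A ↔ (m : G) ∈ A := by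
  rw [NAHmodH, ← QuotientGroup.mk'_apply, ← Subgroup.mem_comap, Subgroup.comap_map_eq,
    QuotientGroup.ker_mk', sup_eq_left.mpr (Subgroup.subgroupOf_mono _ hHA),
    Subgroup.mem_subgroupOf]

theorem ncard_neighbours_normalizerLift_eq_cayleyGraph (hHA : H ≤ A) (hA : A.Normal)
    {D : Set (NormalizerQuotient H)} (hD : IsCosetGraphConnectionSet ⊥ D) {n a : G}
    (hn : n ∈ Subgroup.normalizer (H : Set G)) (ha : a ∈ A) :
    {w | w ∈ {C : G ⧸ H | ∃ a ∈ A, (a : G ⧸ H) = C} ∧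
        (cosetGraph H (normalizerLift H D)).Adj ((n * a : G) : G ⧸ H) w}.ncard =
      {x | x ∈ {C : NormalizerQuotient H ⧸ (⊥ : Subgroup (NormalizerQuotient H)) |
          ∃ b ∈ NAHmodH H A, (b : NormalizerQuotient H ⧸ (⊥ : Subgroup _)) = C} ∧
        (cosetGraph ⊥ D).Adj
          ((((⟨n, hn⟩ : Subgroup.normalizer (H : Set G)) : NormalizerQuotient H)) :
            NormalizerQuotient H ⧸ (⊥ : Subgroup _)) x}.ncard := by
  have hconj (m : G) : n * a * m ∈ A ↔ n * m ∈ A := by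
    rw [show n * a * m = n * a * n⁻¹ * (n * m) by group]
    exact A.mul_mem_cancel_left (hA.conj_mem a ha n)
  have hnbrs : {u | u ∈ normalizerLift H D ∧ n * a * u ∈ A} = normalizerLift H
      {q | q ∈ D ∧ ((⟨n, hn⟩ : Subgroup.normalizer (H : Set G)) : NormalizerQuotient H) * q ∈
        NAHmodH H A} := by
    ext u
    constructor
    · rintro ⟨⟨m, hm, rfl⟩, hnam⟩
      refine ⟨m, ⟨hm, ?_⟩, rfl⟩
      rw [← QuotientGroup.mk_mul, mk_mem_NAHmodH_iff hHA]
      exact (hconj m).mp hnam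
    · rintro ⟨m, ⟨hm, hnm⟩, rfl⟩
      rw [← QuotientGroup.mk_mul, mk_mem_NAHmodH_iff hHA] at hnm
      exact ⟨⟨m, hm, rfl⟩, (hconj m).mpr hnm⟩
  rw [cosetGraph_neighbours_in_cosets (isCosetGraphConnectionSet_normalizerLift hD), hnbrs,
    ncard_image_mk_mul_normalizerLift, ncard_cayleyGraph_neighbours_in_subgroup hD]

end RegularSet

theorem theoremC_forward_general {G : Type*} [Group G] (H A : Subgroup G)
    (hHA : H ≤ A) (hAnG : A.Normal) (r s : ℕ)
    (hGNA : ((Subgroup.normalizer (H : Set G)) : Set G) * (A : Set G) = Set.univ)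
    (hreg : IsRegularSetOfGroup (NAHmodH H A) r s) :
    IsRegularSetOfPair H A r s := by
  obtain ⟨D, hD, hregD⟩ := hreg
  refine ⟨normalizerLift H D, isCosetGraphConnectionSet_normalizerLift hD,
    hregD.of_forall_exists fun v => ?_⟩
  obtain ⟨g, rfl⟩ := QuotientGroup.mk_surjective v
  obtain ⟨n, hn, a, ha, rfl⟩ := Set.mem_mul.mp (hGNA ▸ Set.mem_univ g)
  refine ⟨_, ?_, ncard_neighbours_normalizerLift_eq_cayleyGraph hHA hAnG hD hn ha⟩
  rw [mk_mem_cosets_iff hHA, mk_mem_cosets_iff bot_le, mk_mem_NAHmodH_iff hHA,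
    A.mul_mem_cancel_right ha]

/-- **Theorem C (forward direction).** Let `H ≤ A ⊴ G`, `0 ≤ r ≤ |N_A(H)/H| − 1` with
`gcd(2, |N_A(H)/H| − 1)` dividing `r`, and `0 ≤ s ≤ |N_A(H)/H|`. If `G = N_G(H)A` and
`N_A(H)/H` is an `(r,s)`-regular set of `N_G(H)/H`, then `A` is an `(r,s)`-regular set
of `(G,H)`. -/
theorem theoremC_forward {G : Type*} [Group G] [Fintype G] (H A : Subgroup G)
    (hHA : H ≤ A) (hAnG : A.Normal) (r s : ℕ)
    (hr : r ≤ Nat.card ↥(NAHmodH H A) - 1)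
    (hgcd : Nat.gcd 2 (Nat.card ↥(NAHmodH H A) - 1) ∣ r)
    (hs : s ≤ Nat.card ↥(NAHmodH H A))
    (hGNA : ((Subgroup.normalizer (H : Set G)) : Set G) * (A : Set G) = Set.univ)
    (hreg : IsRegularSetOfGroup (NAHmodH H A) r s) :
    IsRegularSetOfPair H A r s :=
  theoremC_forward_general H A hHA hAnG r s hGNA hreg
end
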